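/- arXiv:2202.10954 — 6 statements merged into one kernel-verified Lean document; each statement's English description precedes it below -/
import Mathlib

section
/- Let 0 ≤ γ < 1 and α, β > 0 with α + β = 1 − γ, and let K : ℝ² ∖ {(x,y) : y = ±x} → ℝ be given by K(x,y) = |x−y|^{−α} |x+y|^{−β}. Then for every N ∈ ℕ there exists a positive constant C, independent of x and y, such that for all (x,y) with y ≠ ±x: |∂^N K/∂x^N (x,y)| + |∂^N K/∂y^N (x,y)| ≤ C |x−y|^{−α} |x+y|^{−β} (|x−y|^{−1} + |x+y|^{−1})^N. -/
/-! Near a point `t ≠ 0` the function `|x| ^ r` is `x ^ r` or `(-x) ^ r`, so its `n`-th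
derivative has absolute value `|(r)ₙ| |t| ^ (r - n)`, with `(r)ₙ` the descending Pochhammer
symbol: each derivative of a factor of `K` costs exactly one inverse power of its own distance.
By the Leibniz rule, `∂ₓᴺ K` is then bounded by a sum of terms
`|x - y| ^ (-α - i) |x + y| ^ (-β - (N - i))`, each at most `K (|x - y|⁻¹ + |x + y|⁻¹) ^ N`.
The `y`-derivative reduces to the `x`-derivative since `|x - t| = |t - x|`. -/

open Finset

theorem abs_iteratedDeriv_abs_rpow (r : ℝ) (n : ℕ) {t : ℝ} (ht : t ≠ 0) :
    |iteratedDeriv n (fun x : ℝ => |x| ^ r) t| =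
      |(descPochhammer ℝ n).eval r| * |t| ^ (r - n) := by
  rcases ht.lt_or_gt with hneg | hpos
  · have heq : (fun x : ℝ => |x| ^ r) =ᶠ[nhds t] fun x => (-x) ^ r := by
      filter_upwards [eventually_lt_nhds hneg] with x hx
      rw [abs_of_neg hx]
    rw [heq.iteratedDeriv_eq, iteratedDeriv_comp_neg n (fun x => x ^ r),
      iteratedDeriv_eq_iterate, Real.iter_deriv_rpow_const, abs_of_neg hneg, smul_eq_mul,
      abs_mul, abs_pow, abs_neg, abs_one, one_pow, one_mul, abs_mul,
      abs_of_nonneg (Real.rpow_nonneg (by linarith) _)]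
  · have heq : (fun x : ℝ => |x| ^ r) =ᶠ[nhds t] fun x => x ^ r := by
      filter_upwards [eventually_gt_nhds hpos] with x hx
      rw [abs_of_pos hx]
    rw [heq.iteratedDeriv_eq, iteratedDeriv_eq_iterate, Real.iter_deriv_rpow_const,
      abs_of_pos hpos, abs_mul, abs_of_nonneg (Real.rpow_nonneg hpos.le _)]

theorem abs_iteratedDeriv_abs_add_rpow (r c : ℝ) (n : ℕ) {t : ℝ} (ht : t + c ≠ 0) :
    |iteratedDeriv n (fun x : ℝ => |x + c| ^ r) t| =
      |(descPochhammer ℝ n).eval r| * (|t + c| ^ r * |t + c|⁻¹ ^ n) := by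
  rw [iteratedDeriv_comp_add_const n (fun x : ℝ => |x| ^ r), abs_iteratedDeriv_abs_rpow r n ht,
    Real.rpow_sub_natCast (abs_ne_zero.2 ht), div_eq_mul_inv, inv_pow]

theorem contDiffAt_abs_add_rpow (r c : ℝ) {n : ℕ} {t : ℝ} (ht : t + c ≠ 0) :
    ContDiffAt ℝ n (fun x : ℝ => |x + c| ^ r) t :=
  (Real.contDiffAt_rpow_const_of_ne (p := r) (abs_ne_zero.2 ht)).comp t
    ((contDiffAt_abs ht).comp t (contDiffAt_id.add contDiffAt_const))

theorem abs_iteratedDeriv_mul_le {f g : ℝ → ℝ} {n : ℕ} {x : ℝ} (hf : ContDiffAt ℝ n f x)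
    (hg : ContDiffAt ℝ n g x) :
    |iteratedDeriv n (fun y => f y * g y) x| ≤
      ∑ i ∈ range (n + 1),
        n.choose i * |iteratedDeriv i f x| * |iteratedDeriv (n - i) g x| := by
  rw [iteratedDeriv_fun_mul hf hg]
  refine (abs_sum_le_sum_abs _ _).trans_eq (sum_congr rfl fun i _ => ?_)
  rw [abs_mul, abs_mul, Nat.abs_cast]

theorem pow_mul_pow_sub_le_add_pow {R : Type*} [CommSemiring R] [PartialOrder R]
    [IsOrderedRing R] {p q : R} (hp : 0 ≤ p) (hq : 0 ≤ q) {n i : ℕ} (hi : i ≤ n) :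
    p ^ i * q ^ (n - i) ≤ (p + q) ^ n := by
  calc p ^ i * q ^ (n - i) ≤ (p + q) ^ i * (p + q) ^ (n - i) := by
        gcongr
        · exact le_add_of_nonneg_right hq
        · exact le_add_of_nonneg_left hp
    _ = (p + q) ^ n := by rw [← pow_add, Nat.add_sub_cancel' hi]

theorem exists_abs_iteratedDeriv_abs_add_rpow_mul_le (r s : ℝ) (N : ℕ) :
    ∃ C : ℝ, 0 < C ∧ ∀ c d t : ℝ, t + c ≠ 0 → t + d ≠ 0 →
      |iteratedDeriv N (fun x : ℝ => |x + c| ^ r * |x + d| ^ s) t| ≤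
        C * (|t + c| ^ r * |t + d| ^ s * (|t + c|⁻¹ + |t + d|⁻¹) ^ N) := by
  set P : ℕ → ℝ → ℝ := fun i u => |(descPochhammer ℝ i).eval u|
  set C₀ := ∑ i ∈ range (N + 1), N.choose i * P i r * P (N - i) s
  have hC₀ : 0 ≤ C₀ := sum_nonneg fun i _ => by positivity
  refine ⟨C₀ + 1, by linarith, fun c d t hc hd => ?_⟩
  set F := |t + c| ^ r
  set G := |t + d| ^ s
  set p := |t + c|⁻¹
  set q := |t + d|⁻¹
  have hterm : ∀ i ∈ range (N + 1),
      N.choose i * |iteratedDeriv i (fun x : ℝ => |x + c| ^ r) t| *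
          |iteratedDeriv (N - i) (fun x : ℝ => |x + d| ^ s) t| ≤
        N.choose i * P i r * P (N - i) s * (F * G * (p + q) ^ N) := by
    intro i hi
    rw [abs_iteratedDeriv_abs_add_rpow r c i hc, abs_iteratedDeriv_abs_add_rpow s d (N - i) hd]
    calc _ = N.choose i * P i r * P (N - i) s * (F * G * (p ^ i * q ^ (N - i))) := by ring
      _ ≤ _ := by
        gcongr
        exact pow_mul_pow_sub_le_add_pow (by positivity) (by positivity)
          (Nat.lt_succ_iff.mp (mem_range.mp hi))
  calc _ ≤ _ := abs_iteratedDeriv_mul_le (contDiffAt_abs_add_rpow r c hc)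
        (contDiffAt_abs_add_rpow s d hd)
    _ ≤ C₀ * (F * G * (p + q) ^ N) := by rw [sum_mul]; exact sum_le_sum hterm
    _ ≤ (C₀ + 1) * (F * G * (p + q) ^ N) := by gcongr; linarith

theorem stmt5_general (α β : ℝ) (N : ℕ) :
    ∃ C : ℝ, 0 < C ∧ ∀ x y : ℝ, y ≠ x → y ≠ -x →
      |iteratedDeriv N (fun t : ℝ => |t - y| ^ (-α) * |t + y| ^ (-β)) x| +
          |iteratedDeriv N (fun t : ℝ => |x - t| ^ (-α) * |x + t| ^ (-β)) y| ≤
        C * (|x - y| ^ (-α) * |x + y| ^ (-β) * (|x - y|⁻¹ + |x + y|⁻¹) ^ N) := by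
  obtain ⟨C, hC, hbound⟩ := exists_abs_iteratedDeriv_abs_add_rpow_mul_le (-α) (-β) N
  refine ⟨2 * C, by positivity, fun x y hyx hyx' => ?_⟩
  have hx := hbound (-y) y x (by grind) (by grind)
  have hy := hbound (-x) x y (by grind) (by grind)
  simp only [← sub_eq_add_neg] at hx hy
  simp only [abs_sub_comm _ x, add_comm _ x] at hy
  linarith

/-- **Derivative estimates for the kernel `K(x,y) = |x-y|^{-α} |x+y|^{-β}`.**
For `0 ≤ γ < 1`, `α, β > 0` with `α + β = 1 - γ` and every `N ∈ ℕ`, there is a constant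
`C > 0`, independent of `x` and `y`, such that for all `(x,y)` with `y ≠ ±x`:
`|∂_x^N K(x,y)| + |∂_y^N K(x,y)| ≤ C |x-y|^{-α} |x+y|^{-β} (|x-y|⁻¹ + |x+y|⁻¹)^N`. -/
theorem stmt5 (γ α β : ℝ) (hγ0 : 0 ≤ γ) (hγ1 : γ < 1) (hα : 0 < α) (hβ : 0 < β)
    (hαβ : α + β = 1 - γ) (N : ℕ) :
    ∃ C : ℝ, 0 < C ∧ ∀ x y : ℝ, y ≠ x → y ≠ -x →
      |iteratedDeriv N (fun t : ℝ => |t - y| ^ (-α) * |t + y| ^ (-β)) x| +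
          |iteratedDeriv N (fun t : ℝ => |x - t| ^ (-α) * |x + t| ^ (-β)) y| ≤
        C * (|x - y| ^ (-α) * |x + y| ^ (-β) * (|x - y|⁻¹ + |x + y|⁻¹) ^ N) :=
  stmt5_general α β N
end

section
/- Let 0 ≤ γ < 1, let α, β > 0 with α + β = 1 − γ, let 1 < p < γ^{−1} (with γ^{−1} = ∞ when γ = 0), and let q be defined by 1/q = 1/p − γ. Then there exists a constant C > 0, depending only on α, β, p and q, such that for every b ∈ ℓ^p(ℤ): (∑_{j∈ℤ} (∑_{i∈ℤ, i≠j, i≠−j} |b(i)| / (|i−j|^α |i+j|^β))^q)^{1/q} ≤ C ‖b‖_{ℓ^p(ℤ)}. In particular T_{α,β} is bounded from ℓ^p(ℤ) into ℓ^q(ℤ). -/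
open scoped ENNReal NNReal BigOperators

/-- The kernel of the fractional series operator `T_{α,β}`:
`1 / (|i-j|^α |i+j|^β)` for `i ≠ ±j`, and `0` for `i = ±j`. -/
noncomputable def Tker (α β : ℝ) (i j : ℤ) : ℝ :=
  if i = j ∨ i = -j then 0 else 1 / (|(i : ℝ) - (j : ℝ)| ^ α * |(i : ℝ) + (j : ℝ)| ^ β)

/-- The kernel of `T_{α,β}` as a `[0,∞]`-valued function. -/
noncomputable def eTker (α β : ℝ) (i j : ℤ) : ℝ≥0∞ :=
  ENNReal.ofReal (Tker α β i j)

/-!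
A weighted Schur test. Put `s = α + β`, `⟨i⟩ = max(|i|, 1)` and `L = K^{1/s}`, a kernel of the
same shape with exponents `α/s + β/s = 1`. For every `0 < c < 1` the weight `⟨i⟩^{-c}` is a
Schur test function for `L`: `∑_i L(i,j) ⟨i⟩^{-c} ≤ C ⟨j⟩^{-c}`. To see this, split the sum into
`i` close to `j`, `i` close to `-j`, the rest of `|i| ≤ 2⟨j⟩`, and the tail `|i| > 2⟨j⟩`, and
compare with `∑_{k ≤ N} k^{-a} ≲ N^{1-a}` (`a < 1`) and `∑_{k > N} k^{-σ} ≲ N^{1-σ}` (`σ > 1`).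
Since `1/p' + 1/q = s`, the exponent `t = 1/(s p')` gives `K^{t p'} = K^{(1-t) q} = L`.
Hölder's inequality in `i` after splitting `K b = (K^t w) (K^{1-t} w⁻¹ b)` with the weight
`w = ⟨·⟩^{-1/(s p' q)}`, followed by Minkowski's inequality in `ℓ^{q/p}`, reduces the
`ℓ^p → ℓ^q` bound to the two test-function estimates with `c = 1/(s q)` and `c = 1/(s p')`.
-/

namespace ENNReal

theorem inner_le_Lp_mul_Lq_tsum {ι : Type*} (f g : ι → ℝ≥0∞) {p q : ℝ}
    (hpq : p.HolderConjugate q) :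
    ∑' i, f i * g i ≤ (∑' i, f i ^ p) ^ (1 / p) * (∑' i, g i ^ q) ^ (1 / q) :=
  ENNReal.summable.tsum_le_of_sum_le fun s => (inner_le_Lp_mul_Lq s f g hpq).trans <| by
    gcongr
    · exact hpq.one_div_nonneg
    · exact ENNReal.sum_le_tsum s
    · exact hpq.symm.one_div_nonneg
    · exact ENNReal.sum_le_tsum s

theorem Lp_sum_le {ι κ : Type*} (F : ι → κ → ℝ≥0∞) {r : ℝ} (hr : 1 ≤ r) (s : Finset ι)
    (u : Finset κ) :
    (∑ j ∈ u, (∑ i ∈ s, F i j) ^ r) ^ (1 / r) ≤ ∑ i ∈ s, (∑ j ∈ u, F i j ^ r) ^ (1 / r) := by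
  induction s using Finset.cons_induction with
  | empty => simp [ENNReal.zero_rpow_of_pos (by linarith : (0 : ℝ) < r)]; linarith
  | cons a s ha ih =>
    simp only [Finset.sum_cons]
    exact (Lp_add_le u (F a) _ hr).trans (by gcongr)

theorem tsum_rpow_tsum_le {ι κ : Type*} (F : ι → κ → ℝ≥0∞) {r : ℝ} (hr : 1 ≤ r) :
    ∑' j, (∑' i, F i j) ^ r ≤ (∑' i, (∑' j, F i j ^ r) ^ (1 / r)) ^ r := by
  have hr₀ : 0 < r := by linarith
  refine ENNReal.summable.tsum_le_of_sum_le fun u => ?_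
  have hsup : ∀ j, (∑' i, F i j) ^ r = ⨆ s : Finset ι, (∑ i ∈ s, F i j) ^ r := fun j => by
    rw [ENNReal.tsum_eq_iSup_sum]
    exact (ENNReal.orderIsoRpow r hr₀).map_iSup _
  simp only [hsup]
  rw [ENNReal.finsetSum_iSup_of_monotone fun j s₁ s₂ h => by gcongr]
  refine iSup_le fun s => ?_
  rw [← ENNReal.rpow_inv_le_iff hr₀, ← one_div]
  calc (∑ j ∈ u, (∑ i ∈ s, F i j) ^ r) ^ (1 / r)
      ≤ ∑ i ∈ s, (∑ j ∈ u, F i j ^ r) ^ (1 / r) := Lp_sum_le F hr s u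
    _ ≤ ∑ i ∈ s, (∑' j, F i j ^ r) ^ (1 / r) := by gcongr; exact ENNReal.sum_le_tsum u
    _ ≤ ∑' i, (∑' j, F i j ^ r) ^ (1 / r) := ENNReal.sum_le_tsum s

theorem tsum_mul_le_of_split {ι : Type*} (k u B : ι → ℝ≥0∞) {v A : ℝ≥0∞} {p p' t : ℝ}
    (hpp' : p.HolderConjugate p') (ht₀ : 0 ≤ t) (ht₁ : t ≤ 1) (hu₀ : ∀ i, u i ≠ 0)
    (hu : ∀ i, u i ≠ ∞) (h : ∑' i, k i ^ (t * p') * u i ^ p' ≤ A * v ^ p') :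
    ∑' i, k i * B i ≤
      A ^ (1 / p') * (∑' i, (v * (k i ^ (1 - t) * (u i)⁻¹ * B i)) ^ p) ^ (1 / p) := by
  have hp : 0 < p := hpp'.pos
  have hp' : 0 < p' := hpp'.symm.pos
  have hsplit : ∀ i, k i * B i = k i ^ t * u i * (k i ^ (1 - t) * (u i)⁻¹ * B i) := fun i =>
    calc k i * B i = k i ^ t * k i ^ (1 - t) * (u i * (u i)⁻¹) * B i := by
          rw [← ENNReal.rpow_add_of_nonneg _ _ ht₀ (by linarith), add_sub_cancel,
            ENNReal.rpow_one, ENNReal.mul_inv_cancel (hu₀ i) (hu i), mul_one]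
      _ = _ := by ring
  have hpow : ∀ {r : ℝ} (x : ℝ≥0∞), 0 < r → (x ^ r) ^ (1 / r) = x := fun x hr => by
    rw [← ENNReal.rpow_mul, mul_one_div_cancel hr.ne', ENNReal.rpow_one]
  have hH : ∑' i, (k i ^ t * u i) ^ p' = ∑' i, k i ^ (t * p') * u i ^ p' := by
    simp only [ENNReal.mul_rpow_of_nonneg _ _ hp'.le, ← ENNReal.rpow_mul]
  rw [tsum_congr hsplit]
  calc _ ≤ (∑' i, (k i ^ t * u i) ^ p') ^ (1 / p') *
          (∑' i, (k i ^ (1 - t) * (u i)⁻¹ * B i) ^ p) ^ (1 / p) :=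
        inner_le_Lp_mul_Lq_tsum _ _ hpp'.symm
    _ ≤ (A * v ^ p') ^ (1 / p') * (∑' i, (k i ^ (1 - t) * (u i)⁻¹ * B i) ^ p) ^ (1 / p) := by
        rw [hH]; gcongr
    _ = _ := by
        simp only [ENNReal.mul_rpow_of_nonneg _ _ hp.le, ENNReal.tsum_mul_left]
        rw [ENNReal.mul_rpow_of_nonneg _ _ (by positivity), hpow v hp',
          ENNReal.mul_rpow_of_nonneg _ _ (by positivity), hpow v hp, mul_assoc]

theorem tsum_rpow_le_of_split {κ : Type*} (k v : κ → ℝ≥0∞) {u b D : ℝ≥0∞} {p q r : ℝ}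
    (hp : 0 < p) (hq : 0 < q) (hu₀ : u ≠ 0) (hu : u ≠ ∞)
    (h : ∑' j, k j ^ (r * q) * v j ^ q ≤ D * u ^ q) :
    ∑' j, ((v j * (k j ^ r * u⁻¹ * b)) ^ p) ^ (q / p) ≤ D * b ^ q :=
  calc ∑' j, ((v j * (k j ^ r * u⁻¹ * b)) ^ p) ^ (q / p)
      = (∑' j, k j ^ (r * q) * v j ^ q) * (u⁻¹ * b) ^ q := by
        rw [← ENNReal.tsum_mul_right]
        refine tsum_congr fun j => ?_
        simp only [← ENNReal.rpow_mul, mul_div_cancel₀ q hp.ne',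
          ENNReal.mul_rpow_of_nonneg _ _ hq.le]
        ring
    _ ≤ D * u ^ q * (u⁻¹ * b) ^ q := by gcongr
    _ = D * b ^ q := by
        rw [mul_assoc, ← ENNReal.mul_rpow_of_nonneg _ _ hq.le, ENNReal.mul_inv_cancel_left hu₀ hu]

theorem Lq_tsum_mul_le_of_schur {ι κ : Type*} {K : ι → κ → ℝ≥0∞} {u : ι → ℝ≥0∞}
    {v : κ → ℝ≥0∞} {p p' q t : ℝ} {A D : ℝ≥0∞} (hpp' : p.HolderConjugate p') (hpq : p ≤ q)
    (ht₀ : 0 ≤ t) (ht₁ : t ≤ 1) (hu₀ : ∀ i, u i ≠ 0) (hu : ∀ i, u i ≠ ∞)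
    (h₁ : ∀ j, ∑' i, K i j ^ (t * p') * u i ^ p' ≤ A * v j ^ p')
    (h₂ : ∀ i, ∑' j, K i j ^ ((1 - t) * q) * v j ^ q ≤ D * u i ^ q) (B : ι → ℝ≥0∞) :
    (∑' j, (∑' i, K i j * B i) ^ q) ^ (1 / q) ≤
      A ^ (1 / p') * D ^ (1 / q) * (∑' i, B i ^ p) ^ (1 / p) := by
  have hp : 0 < p := hpp'.pos
  have hq : 0 < q := hp.trans_le hpq
  set G : ι → κ → ℝ≥0∞ := fun i j => (v j * (K i j ^ (1 - t) * (u i)⁻¹ * B i)) ^ p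
  have hrow : ∀ j, (∑' i, K i j * B i) ^ q ≤ A ^ (q / p') * (∑' i, G i j) ^ (q / p) := fun j =>
    (ENNReal.rpow_le_rpow (tsum_mul_le_of_split _ u B hpp' ht₀ ht₁ hu₀ hu (h₁ j)) hq.le).trans_eq
      (by rw [ENNReal.mul_rpow_of_nonneg _ _ hq.le, ← ENNReal.rpow_mul, ← ENNReal.rpow_mul,
        one_div_mul_eq_div, one_div_mul_eq_div])
  have hcol : ∀ i, ∑' j, G i j ^ (q / p) ≤ D * B i ^ q := fun i =>
    tsum_rpow_le_of_split _ v hp hq (hu₀ i) (hu i) (h₂ i)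
  suffices h : ∑' j, (∑' i, K i j * B i) ^ q ≤
      (A ^ (1 / p') * D ^ (1 / q) * (∑' i, B i ^ p) ^ (1 / p)) ^ q by
    refine (ENNReal.rpow_le_rpow h (by positivity)).trans_eq ?_
    rw [← ENNReal.rpow_mul, mul_one_div_cancel hq.ne', ENNReal.rpow_one]
  calc ∑' j, (∑' i, K i j * B i) ^ q
      ≤ A ^ (q / p') * ∑' j, (∑' i, G i j) ^ (q / p) := by
        rw [← ENNReal.tsum_mul_left]; exact ENNReal.tsum_le_tsum hrow
    _ ≤ A ^ (q / p') * (∑' i, (∑' j, G i j ^ (q / p)) ^ (1 / (q / p))) ^ (q / p) := by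
        gcongr
        exact tsum_rpow_tsum_le G ((one_le_div hp).2 hpq)
    _ ≤ A ^ (q / p') * (∑' i, (D * B i ^ q) ^ (1 / (q / p))) ^ (q / p) := by
        gcongr with i; exact hcol i
    _ = (A ^ (1 / p') * D ^ (1 / q) * (∑' i, B i ^ p) ^ (1 / p)) ^ q := by
        simp only [one_div_div, ENNReal.mul_rpow_of_nonneg _ _ (div_pos hp hq).le,
          ENNReal.tsum_mul_left, ENNReal.mul_rpow_of_nonneg _ _ (div_pos hq hp).le,
          ENNReal.mul_rpow_of_nonneg _ _ hq.le, ← ENNReal.rpow_mul]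
        rw [mul_div_cancel₀ p hq.ne', div_mul_div_cancel₀ hq.ne', div_self hp.ne',
          one_div_mul_eq_div, one_div_mul_cancel hq.ne', one_div_mul_eq_div, ENNReal.rpow_one,
          mul_assoc]

end ENNReal

theorem Real.rpow_neg_le_sub_rpow_div {e y : ℝ} (he : 0 ≤ e) (he₁ : e ≠ 1) (hy : 0 ≤ y)
    (hy₀ : 0 < y ∨ e < 1) :
    (y + 1) ^ (-e) ≤ ((y + 1) ^ (1 - e) - y ^ (1 - e)) / (1 - e) := by
  have he₁' : 1 - e ≠ 0 := sub_ne_zero.2 he₁.symm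
  obtain ⟨c, hc, hslope⟩ := exists_hasDerivAt_eq_slope (fun x => x ^ (1 - e) / (1 - e))
    (fun x => x ^ (-e)) (lt_add_one y)
    (ContinuousOn.div_const (ContinuousOn.rpow_const continuousOn_id fun x hx => by
      rcases hy₀ with hy₀ | hy₀
      · exact Or.inl (hy₀.trans_le hx.1).ne'
      · exact Or.inr (by linarith)) _)
    fun x hx => by
      have := (Real.hasDerivAt_rpow_const (p := 1 - e) (Or.inl (hy.trans_lt hx.1).ne')).div_const
        (1 - e)
      rwa [sub_sub_cancel_left, mul_div_cancel_left₀ _ he₁'] at this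
  rw [add_sub_cancel_left, div_one, ← sub_div] at hslope
  rw [← hslope]
  exact Real.rpow_le_rpow_of_nonpos (hy.trans_lt hc.1) hc.2.le (by linarith)

theorem Real.sum_Ioc_rpow_neg_le {e : ℝ} (he : 0 ≤ e) (he₁ : e ≠ 1) {m n : ℕ} (hmn : m ≤ n)
    (hm : 0 < m ∨ e < 1) :
    ∑ k ∈ Finset.Ioc m n, (k : ℝ) ^ (-e) ≤ ((n : ℝ) ^ (1 - e) - (m : ℝ) ^ (1 - e)) / (1 - e) := by
  induction n, hmn using Nat.le_induction with
  | base => simp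
  | succ n hmn ih =>
    rw [Finset.sum_Ioc_succ_top (by omega), Nat.cast_succ]
    have hstep := Real.rpow_neg_le_sub_rpow_div he he₁ n.cast_nonneg
      (hm.imp_left fun hm => by exact_mod_cast hm.trans_le hmn)
    calc _ ≤ ((n : ℝ) ^ (1 - e) - (m : ℝ) ^ (1 - e)) / (1 - e)
          + (((n : ℝ) + 1) ^ (1 - e) - (n : ℝ) ^ (1 - e)) / (1 - e) := add_le_add ih hstep
      _ = _ := by ring

namespace ENNReal

-- The hypothesis excludes `0 ^ e` with `e < 0`, which is `∞` in `ℝ≥0∞` but `0` in `ℝ`.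
theorem natCast_rpow_eq_ofReal {n : ℕ} {e : ℝ} (h : n ≠ 0 ∨ 0 ≤ e) :
    (n : ℝ≥0∞) ^ e = ENNReal.ofReal ((n : ℝ) ^ e) := by
  rw [← ENNReal.ofReal_natCast]
  rcases h with h | h
  · exact ENNReal.ofReal_rpow_of_pos (by positivity)
  · exact ENNReal.ofReal_rpow_of_nonneg n.cast_nonneg h

theorem natCast_rpow_neg_le {m n : ℕ} {e : ℝ} (h : n ≤ m) (he : 0 ≤ e) :
    (m : ℝ≥0∞) ^ (-e) ≤ (n : ℝ≥0∞) ^ (-e) := by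
  rw [ENNReal.rpow_neg, ENNReal.rpow_neg]
  gcongr

theorem two_rpow_le_two {e : ℝ} (he : e ≤ 1) : (2 : ℝ≥0∞) ^ e ≤ 2 := by
  simpa using ENNReal.rpow_le_rpow_of_exponent_le one_le_two he

theorem natCast_rpow_neg_le_two_mul {m n : ℕ} {e : ℝ} (h : n ≤ 2 * m) (he : 0 ≤ e)
    (he₁ : e ≤ 1) : (m : ℝ≥0∞) ^ (-e) ≤ 2 * (n : ℝ≥0∞) ^ (-e) :=
  calc (m : ℝ≥0∞) ^ (-e) = 2 ^ e * ((2 * m : ℕ) : ℝ≥0∞) ^ (-e) := by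
        rw [Nat.cast_mul, Nat.cast_two, ENNReal.rpow_neg, ENNReal.rpow_neg,
          ENNReal.mul_rpow_of_nonneg _ _ he, ENNReal.mul_inv (by simp) (by simp), ← mul_assoc,
          ENNReal.mul_inv_cancel (by simp) (by simp), one_mul]
    _ ≤ 2 * (n : ℝ≥0∞) ^ (-e) := mul_le_mul' (two_rpow_le_two he₁) (natCast_rpow_neg_le h he)

theorem sum_Ioc_natCast_rpow_neg_le {e : ℝ} (he : 0 ≤ e) (he₁ : e ≠ 1) {m n : ℕ}
    (hmn : m ≤ n) (hm : 0 < m ∨ e < 1) :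
    ∑ k ∈ Finset.Ioc m n, (k : ℝ≥0∞) ^ (-e) ≤
      ENNReal.ofReal (((n : ℝ) ^ (1 - e) - (m : ℝ) ^ (1 - e)) / (1 - e)) :=
  calc ∑ k ∈ Finset.Ioc m n, (k : ℝ≥0∞) ^ (-e)
      = ∑ k ∈ Finset.Ioc m n, ENNReal.ofReal ((k : ℝ) ^ (-e)) := Finset.sum_congr rfl fun k hk =>
        natCast_rpow_eq_ofReal (Or.inl (Nat.ne_zero_of_lt (Finset.mem_Ioc.1 hk).1))
    _ ≤ _ := by
      rw [← ENNReal.ofReal_sum_of_nonneg fun k _ => by positivity]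
      exact ENNReal.ofReal_le_ofReal (Real.sum_Ioc_rpow_neg_le he he₁ hmn hm)

theorem sum_Ioc_zero_natCast_rpow_neg_le {a : ℝ} (ha : 0 ≤ a) (ha₁ : a < 1) (n : ℕ) :
    ∑ k ∈ Finset.Ioc 0 n, (k : ℝ≥0∞) ^ (-a) ≤ ENNReal.ofReal (1 - a)⁻¹ * (n : ℝ≥0∞) ^ (1 - a) := by
  refine (sum_Ioc_natCast_rpow_neg_le ha ha₁.ne n.zero_le (Or.inr ha₁)).trans_eq ?_
  rw [Nat.cast_zero, Real.zero_rpow (by linarith), sub_zero, div_eq_inv_mul,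
    ENNReal.ofReal_mul (by simp; linarith), natCast_rpow_eq_ofReal (Or.inr (by linarith))]

theorem tsum_indicator_Ioi_natCast_rpow_neg_le {σ : ℝ} (hσ : 1 < σ) {n : ℕ} (hn : n ≠ 0) :
    ∑' k : ℕ, (Set.Ioi n).indicator (fun k : ℕ => (k : ℝ≥0∞) ^ (-σ)) k ≤
      ENNReal.ofReal (σ - 1)⁻¹ * (n : ℝ≥0∞) ^ (1 - σ) := by
  refine ENNReal.tsum_le_of_sum_range_le fun M => ?_
  calc ∑ k ∈ Finset.range M, (Set.Ioi n).indicator (fun k : ℕ => (k : ℝ≥0∞) ^ (-σ)) k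
      ≤ ∑ k ∈ Finset.Ioc n (max n M), (k : ℝ≥0∞) ^ (-σ) := by
        rw [Finset.sum_indicator_eq_sum_filter]
        exact Finset.sum_le_sum_of_subset fun k hk => by
          simp only [Finset.mem_filter, Finset.mem_range, Set.mem_Ioi] at hk
          exact Finset.mem_Ioc.2 ⟨hk.2, by omega⟩
    _ ≤ ENNReal.ofReal (((max n M : ℕ) ^ (1 - σ) - (n : ℝ) ^ (1 - σ)) / (1 - σ)) :=
        sum_Ioc_natCast_rpow_neg_le (by linarith) hσ.ne' (le_max_left _ _)
          (Or.inl (Nat.pos_of_ne_zero hn))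
    _ ≤ ENNReal.ofReal ((σ - 1)⁻¹ * (n : ℝ) ^ (1 - σ)) := by
        gcongr
        rw [div_eq_inv_mul, ← neg_sub σ 1, inv_neg, neg_mul_comm, neg_sub]
        exact mul_le_mul_of_nonneg_left (sub_le_self _ (by positivity)) (by simp; linarith)
    _ = _ := by rw [ENNReal.ofReal_mul (by simp; linarith), natCast_rpow_eq_ofReal (Or.inl hn)]

theorem tsum_int_natAbs_le (g : ℕ → ℝ≥0∞) : ∑' i : ℤ, g i.natAbs ≤ 2 * ∑' n, g n := by
  rw [tsum_of_nat_of_neg_add_one ENNReal.summable ENNReal.summable, two_mul]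
  refine add_le_add (by simp) ?_
  exact ENNReal.tsum_comp_le_tsum_of_injective (f := fun n : ℕ => (-((n : ℤ) + 1)).natAbs)
    (fun m n h => by simp only at h; omega) g

theorem tsum_indicator_Ioc_natAbs_sub_le {a : ℝ} (ha : 0 ≤ a) (ha₁ : a < 1) (j₀ : ℤ) (n : ℕ) :
    ∑' i : ℤ, (Set.Ioc 0 n).indicator (fun k : ℕ => (k : ℝ≥0∞) ^ (-a)) (i - j₀).natAbs ≤
      2 * ENNReal.ofReal (1 - a)⁻¹ * (n : ℝ≥0∞) ^ (1 - a) := by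
  refine ((Equiv.subRight j₀).tsum_eq fun i => (Set.Ioc 0 n).indicator _ i.natAbs).trans_le
    ((tsum_int_natAbs_le _).trans ?_)
  rw [← Finset.coe_Ioc, ← sum_eq_tsum_indicator, mul_assoc]
  gcongr
  exact sum_Ioc_zero_natCast_rpow_neg_le ha ha₁ n

theorem tsum_indicator_Iic_two_mul_natAbs_le {c : ℝ} (hc : 0 ≤ c) (hc₁ : c < 1) {n : ℕ}
    (hn : n ≠ 0) :
    ∑' i : ℤ, (Set.Iic (2 * n)).indicator (fun k : ℕ => ((max k 1 : ℕ) : ℝ≥0∞) ^ (-c)) i.natAbs ≤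
      2 * (1 + 2 * ENNReal.ofReal (1 - c)⁻¹) * (n : ℝ≥0∞) ^ (1 - c) := by
  have h2n : ((2 * n : ℕ) : ℝ≥0∞) ^ (1 - c) ≤ 2 * (n : ℝ≥0∞) ^ (1 - c) := by
    rw [Nat.cast_mul, Nat.cast_two, ENNReal.mul_rpow_of_nonneg _ _ (by linarith)]
    gcongr
    exact two_rpow_le_two (by linarith)
  have h1n : 1 ≤ (n : ℝ≥0∞) ^ (1 - c) :=
    ENNReal.one_le_rpow (by exact_mod_cast Nat.one_le_iff_ne_zero.2 hn) (by linarith)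
  refine (tsum_int_natAbs_le _).trans ?_
  rw [← Finset.coe_Iic, ← sum_eq_tsum_indicator, Finset.Iic_eq_Icc, Nat.bot_eq_zero,
    Finset.Icc_eq_cons_Ioc (Nat.zero_le _), Finset.sum_cons,
    Finset.sum_congr rfl fun k hk => by rw [max_eq_left (Finset.mem_Ioc.1 hk).1]]
  calc 2 * (((max 0 1 : ℕ) : ℝ≥0∞) ^ (-c) + ∑ k ∈ Finset.Ioc 0 (2 * n), (k : ℝ≥0∞) ^ (-c))
      ≤ 2 * ((n : ℝ≥0∞) ^ (1 - c) +
          ENNReal.ofReal (1 - c)⁻¹ * (2 * (n : ℝ≥0∞) ^ (1 - c))) := by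
        gcongr
        · simpa using h1n
        · exact (sum_Ioc_zero_natCast_rpow_neg_le hc hc₁ _).trans (by gcongr)
    _ = _ := by ring

theorem tsum_indicator_Ioi_two_mul_natAbs_le {σ : ℝ} (hσ : 1 < σ) {n : ℕ} (hn : n ≠ 0) :
    ∑' i : ℤ, (Set.Ioi (2 * n)).indicator (fun k : ℕ => (k : ℝ≥0∞) ^ (-σ)) i.natAbs ≤
      2 * ENNReal.ofReal (σ - 1)⁻¹ * (n : ℝ≥0∞) ^ (1 - σ) := by
  refine (tsum_int_natAbs_le _).trans ?_
  rw [mul_assoc]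
  gcongr
  refine (tsum_indicator_Ioi_natCast_rpow_neg_le hσ (by omega)).trans (mul_le_mul' le_rfl ?_)
  rw [show 1 - σ = -(σ - 1) by ring]
  exact natCast_rpow_neg_le (by omega) (by linarith)

end ENNReal

def natAbsMaxOne (i : ℤ) : ℕ := max i.natAbs 1

theorem natAbsMaxOne_neg (i : ℤ) : natAbsMaxOne (-i) = natAbsMaxOne i := by
  simp [natAbsMaxOne]

section Kernel

variable {α β a b c : ℝ} {i j : ℤ}

theorem eTker_of_eq_or_eq_neg (h : i = j ∨ i = -j) : eTker α β i j = 0 := by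
  simp [eTker, Tker, h]

theorem eTker_of_ne (h : ¬(i = j ∨ i = -j)) :
    eTker α β i j = ((i - j).natAbs : ℝ≥0∞) ^ (-α) * ((i + j).natAbs : ℝ≥0∞) ^ (-β) := by
  have hsub : (i - j).natAbs ≠ 0 := by omega
  have hadd : (i + j).natAbs ≠ 0 := by omega
  have habs : ∀ k : ℤ, |(k : ℝ)| = (k.natAbs : ℝ) := fun k => by rw [Nat.cast_natAbs, Int.cast_abs]
  rw [eTker, Tker, if_neg h, ENNReal.natCast_rpow_eq_ofReal (Or.inl hsub),
    ENNReal.natCast_rpow_eq_ofReal (Or.inl hadd), ← ENNReal.ofReal_mul (by positivity),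
    ← Int.cast_sub, ← Int.cast_add, habs, habs, Real.rpow_neg (by positivity),
    Real.rpow_neg (by positivity), one_div, mul_inv]

theorem eTker_rpow (α β : ℝ) (i j : ℤ) {e : ℝ} (he : 0 < e) :
    eTker α β i j ^ e = eTker (α * e) (β * e) i j := by
  by_cases h : i = j ∨ i = -j
  · rw [eTker_of_eq_or_eq_neg h, eTker_of_eq_or_eq_neg h, ENNReal.zero_rpow_of_pos he]
  · rw [eTker_of_ne h, eTker_of_ne h, ENNReal.mul_rpow_of_nonneg _ _ he.le, ← ENNReal.rpow_mul,
      ← ENNReal.rpow_mul, neg_mul, neg_mul]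

theorem eTker_comm (α β : ℝ) (i j : ℤ) : eTker α β i j = eTker α β j i := by
  by_cases h : i = j ∨ i = -j
  · rw [eTker_of_eq_or_eq_neg h, eTker_of_eq_or_eq_neg (by omega)]
  · rw [eTker_of_ne h, eTker_of_ne (by omega), show (i - j).natAbs = (j - i).natAbs by omega,
      add_comm]

theorem eTker_neg_right (α β : ℝ) (i j : ℤ) : eTker α β i (-j) = eTker β α i j := by
  by_cases h : i = j ∨ i = -j
  · rw [eTker_of_eq_or_eq_neg h, eTker_of_eq_or_eq_neg (by omega)]
  · rw [eTker_of_ne h, eTker_of_ne (by omega), sub_neg_eq_add, ← sub_eq_add_neg, mul_comm]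

theorem eTker_mul_rpow_le_of_near (hb : 0 ≤ b) (hc : 0 ≤ c) (hc₁ : c ≤ 1) (hij : i ≠ j)
    (h : 2 * (i - j).natAbs ≤ j.natAbs) :
    eTker a b i j * (natAbsMaxOne i : ℝ≥0∞) ^ (-c) ≤
      2 * (natAbsMaxOne j : ℝ≥0∞) ^ (-(b + c)) * ((i - j).natAbs : ℝ≥0∞) ^ (-a) := by
  have hN : (natAbsMaxOne j : ℝ≥0∞) ≠ 0 := by simp [natAbsMaxOne]
  rw [eTker_of_ne (by omega), neg_add, ENNReal.rpow_add _ _ hN (ENNReal.natCast_ne_top _)]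
  calc ((i - j).natAbs : ℝ≥0∞) ^ (-a) * ((i + j).natAbs : ℝ≥0∞) ^ (-b) *
        (natAbsMaxOne i : ℝ≥0∞) ^ (-c)
      ≤ ((i - j).natAbs : ℝ≥0∞) ^ (-a) * (natAbsMaxOne j : ℝ≥0∞) ^ (-b) *
          (2 * (natAbsMaxOne j : ℝ≥0∞) ^ (-c)) := by
        refine mul_le_mul' (mul_le_mul' le_rfl ?_) ?_
        · exact ENNReal.natCast_rpow_neg_le (by simp only [natAbsMaxOne]; omega) hb
        · exact ENNReal.natCast_rpow_neg_le_two_mul (by simp only [natAbsMaxOne]; omega) hc hc₁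
    _ = _ := by ring

theorem eTker_mul_rpow_le_of_middle (ha : 0 ≤ a) (ha₁ : a ≤ 1) (hb : 0 ≤ b) (hb₁ : b ≤ 1)
    (h : ¬(i = j ∨ i = -j)) (h₁ : j.natAbs < 2 * (i - j).natAbs)
    (h₂ : j.natAbs < 2 * (i + j).natAbs) :
    eTker a b i j * (natAbsMaxOne i : ℝ≥0∞) ^ (-c) ≤
      4 * (natAbsMaxOne j : ℝ≥0∞) ^ (-(a + b)) * (natAbsMaxOne i : ℝ≥0∞) ^ (-c) := by
  have hN : (natAbsMaxOne j : ℝ≥0∞) ≠ 0 := by simp [natAbsMaxOne]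
  rw [eTker_of_ne h, neg_add, ENNReal.rpow_add _ _ hN (ENNReal.natCast_ne_top _)]
  calc ((i - j).natAbs : ℝ≥0∞) ^ (-a) * ((i + j).natAbs : ℝ≥0∞) ^ (-b) *
        (natAbsMaxOne i : ℝ≥0∞) ^ (-c)
      ≤ (2 * (natAbsMaxOne j : ℝ≥0∞) ^ (-a)) * (2 * (natAbsMaxOne j : ℝ≥0∞) ^ (-b)) *
          (natAbsMaxOne i : ℝ≥0∞) ^ (-c) := by
        refine mul_le_mul' (mul_le_mul' ?_ ?_) le_rfl
        · exact ENNReal.natCast_rpow_neg_le_two_mul (by simp only [natAbsMaxOne]; omega) ha ha₁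
        · exact ENNReal.natCast_rpow_neg_le_two_mul (by simp only [natAbsMaxOne]; omega) hb hb₁
    _ = _ := by ring

theorem eTker_mul_rpow_le_of_far (ha : 0 ≤ a) (ha₁ : a ≤ 1) (hb : 0 ≤ b) (hb₁ : b ≤ 1)
    (h : 2 * natAbsMaxOne j < i.natAbs) :
    eTker a b i j * (natAbsMaxOne i : ℝ≥0∞) ^ (-c) ≤
      4 * (i.natAbs : ℝ≥0∞) ^ (-(a + b + c)) := by
  unfold natAbsMaxOne at h ⊢
  have hi : (i.natAbs : ℝ≥0∞) ≠ 0 := by simp; omega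
  have hitop : (i.natAbs : ℝ≥0∞) ≠ ∞ := ENNReal.natCast_ne_top _
  rw [eTker_of_ne (by omega), show max i.natAbs 1 = i.natAbs by omega, neg_add, neg_add,
    ENNReal.rpow_add _ _ hi hitop, ENNReal.rpow_add _ _ hi hitop]
  calc ((i - j).natAbs : ℝ≥0∞) ^ (-a) * ((i + j).natAbs : ℝ≥0∞) ^ (-b) *
        (i.natAbs : ℝ≥0∞) ^ (-c)
      ≤ (2 * (i.natAbs : ℝ≥0∞) ^ (-a)) * (2 * (i.natAbs : ℝ≥0∞) ^ (-b)) *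
          (i.natAbs : ℝ≥0∞) ^ (-c) := by
        refine mul_le_mul' (mul_le_mul' ?_ ?_) le_rfl
        · exact ENNReal.natCast_rpow_neg_le_two_mul (by omega) ha ha₁
        · exact ENNReal.natCast_rpow_neg_le_two_mul (by omega) hb hb₁
    _ = _ := by ring

theorem eTker_mul_rpow_le (ha : 0 ≤ a) (ha₁ : a ≤ 1) (hb : 0 ≤ b) (hb₁ : b ≤ 1) (hc : 0 ≤ c)
    (hc₁ : c ≤ 1) {N : ℕ} (hN : natAbsMaxOne j = N) :
    eTker a b i j * (natAbsMaxOne i : ℝ≥0∞) ^ (-c) ≤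
      2 * (N : ℝ≥0∞) ^ (-(b + c)) *
          (Set.Ioc 0 N).indicator (fun k : ℕ => (k : ℝ≥0∞) ^ (-a)) (i - j).natAbs +
        2 * (N : ℝ≥0∞) ^ (-(a + c)) *
          (Set.Ioc 0 N).indicator (fun k : ℕ => (k : ℝ≥0∞) ^ (-b)) (i - -j).natAbs +
        4 * (N : ℝ≥0∞) ^ (-(a + b)) *
          (Set.Iic (2 * N)).indicator (fun k : ℕ => ((max k 1 : ℕ) : ℝ≥0∞) ^ (-c)) i.natAbs +
        4 * (Set.Ioi (2 * N)).indicator (fun k : ℕ => (k : ℝ≥0∞) ^ (-(a + b + c))) i.natAbs := by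
  have hN' : max j.natAbs 1 = N := hN
  by_cases h : i = j ∨ i = -j
  · simp [eTker_of_eq_or_eq_neg h]
  by_cases h₁ : 2 * (i - j).natAbs ≤ j.natAbs
  · refine le_trans ?_ ((le_self_add.trans le_self_add).trans le_self_add)
    rw [Set.indicator_of_mem (by simp; omega), ← hN]
    exact eTker_mul_rpow_le_of_near hb hc hc₁ (by omega) h₁
  by_cases h₂ : 2 * (i - -j).natAbs ≤ j.natAbs
  · refine le_trans ?_ ((le_add_self.trans le_self_add).trans le_self_add)
    rw [Set.indicator_of_mem (by simp; omega), ← hN, ← natAbsMaxOne_neg j,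
      ← eTker_neg_right b a i j]
    exact eTker_mul_rpow_le_of_near ha hc hc₁ (by omega) (by simpa using h₂)
  by_cases h₃ : i.natAbs ≤ 2 * N
  · refine le_trans ?_ (le_add_self.trans le_self_add)
    rw [Set.indicator_of_mem (by simpa using h₃), ← hN]
    exact eTker_mul_rpow_le_of_middle ha ha₁ hb hb₁ h (by omega) (by omega)
  · refine le_trans ?_ le_add_self
    rw [Set.indicator_of_mem (by simpa using h₃)]
    exact eTker_mul_rpow_le_of_far ha ha₁ hb hb₁ (by omega)

end Kernel

theorem tsum_eTker_mul_rpow_le {a b c : ℝ} (ha : 0 ≤ a) (ha₁ : a < 1) (hb : 0 ≤ b) (hb₁ : b < 1)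
    (hc : 0 ≤ c) (hc₁ : c < 1) (habc : 1 < a + b + c) :
    ∃ C : ℝ≥0∞, C ≠ ∞ ∧ ∀ j : ℤ, ∑' i, eTker a b i j * (natAbsMaxOne i : ℝ≥0∞) ^ (-c) ≤
      C * (natAbsMaxOne j : ℝ≥0∞) ^ (1 - (a + b + c)) := by
  set Ca := ENNReal.ofReal (1 - a)⁻¹
  set Cb := ENNReal.ofReal (1 - b)⁻¹
  set Cc := ENNReal.ofReal (1 - c)⁻¹
  set Cσ := ENNReal.ofReal (a + b + c - 1)⁻¹
  refine ⟨4 * Ca + 4 * Cb + 8 * (1 + 2 * Cc) + 8 * Cσ, by finiteness, fun j => ?_⟩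
  obtain ⟨N, hN⟩ : ∃ N, natAbsMaxOne j = N := ⟨_, rfl⟩
  have hN₀ : N ≠ 0 := by rw [← hN]; simp [natAbsMaxOne]
  have hpow : ∀ e₁ e₂ : ℝ, e₁ + e₂ = 1 - (a + b + c) →
      (N : ℝ≥0∞) ^ e₁ * (N : ℝ≥0∞) ^ e₂ = (N : ℝ≥0∞) ^ (1 - (a + b + c)) := fun e₁ e₂ h => by
    rw [← ENNReal.rpow_add _ _ (by simpa using hN₀) (ENNReal.natCast_ne_top N), h]
  rw [hN]
  refine (ENNReal.tsum_le_tsum fun i => eTker_mul_rpow_le ha ha₁.le hb hb₁.le hc hc₁.le hN).trans ?_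
  simp only [ENNReal.tsum_add, ENNReal.tsum_mul_left]
  calc _
      ≤ 2 * (N : ℝ≥0∞) ^ (-(b + c)) * (2 * Ca * (N : ℝ≥0∞) ^ (1 - a)) +
          2 * (N : ℝ≥0∞) ^ (-(a + c)) * (2 * Cb * (N : ℝ≥0∞) ^ (1 - b)) +
          4 * (N : ℝ≥0∞) ^ (-(a + b)) * (2 * (1 + 2 * Cc) * (N : ℝ≥0∞) ^ (1 - c)) +
          4 * (2 * Cσ * (N : ℝ≥0∞) ^ (1 - (a + b + c))) := by
        gcongr ?_ + ?_ + ?_ + ?_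
        · exact mul_le_mul' le_rfl (ENNReal.tsum_indicator_Ioc_natAbs_sub_le ha ha₁ j N)
        · exact mul_le_mul' le_rfl (ENNReal.tsum_indicator_Ioc_natAbs_sub_le hb hb₁ (-j) N)
        · exact mul_le_mul' le_rfl (ENNReal.tsum_indicator_Iic_two_mul_natAbs_le hc hc₁ hN₀)
        · exact mul_le_mul' le_rfl (ENNReal.tsum_indicator_Ioi_two_mul_natAbs_le habc hN₀)
    _ = 4 * Ca * ((N : ℝ≥0∞) ^ (-(b + c)) * (N : ℝ≥0∞) ^ (1 - a)) +
          4 * Cb * ((N : ℝ≥0∞) ^ (-(a + c)) * (N : ℝ≥0∞) ^ (1 - b)) +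
          8 * (1 + 2 * Cc) * ((N : ℝ≥0∞) ^ (-(a + b)) * (N : ℝ≥0∞) ^ (1 - c)) +
          8 * Cσ * (N : ℝ≥0∞) ^ (1 - (a + b + c)) := by ring
    _ = _ := by
        rw [hpow _ _ (by ring), hpow _ _ (by ring), hpow _ _ (by ring)]
        ring

theorem tsum_normalized_eTker_mul_rpow_le {α β c : ℝ} (hα : 0 < α) (hβ : 0 < β) (hc : 0 < c)
    (hc₁ : c < 1) :
    ∃ C : ℝ≥0∞, C ≠ ∞ ∧ ∀ j : ℤ,
      ∑' i, eTker α β i j ^ (α + β)⁻¹ * (natAbsMaxOne i : ℝ≥0∞) ^ (-c) ≤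
        C * (natAbsMaxOne j : ℝ≥0∞) ^ (-c) := by
  have hs : 0 < α + β := by positivity
  have hab : α * (α + β)⁻¹ + β * (α + β)⁻¹ = 1 := by rw [← add_mul, mul_inv_cancel₀ hs.ne']
  have hαs : 0 < α * (α + β)⁻¹ := by positivity
  have hβs : 0 < β * (α + β)⁻¹ := by positivity
  obtain ⟨C, hC, h⟩ := tsum_eTker_mul_rpow_le hαs.le (by linarith) hβs.le (by linarith) hc.le hc₁
    (by linarith)
  refine ⟨C, hC, fun j => ?_⟩
  simpa only [eTker_rpow _ _ _ _ (inv_pos.2 hs), hab, sub_add_cancel_left] using h j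

theorem Lq_tsum_eTker_mul_le {α β p p' q : ℝ} (hα : 0 < α) (hβ : 0 < β)
    (hpp' : p.HolderConjugate p') (hpq : p ≤ q) (hs : 1 / p' + 1 / q = α + β) :
    ∃ C : ℝ≥0∞, C ≠ ∞ ∧ ∀ B : ℤ → ℝ≥0∞,
      (∑' j, (∑' i, eTker α β i j * B i) ^ q) ^ (1 / q) ≤ C * (∑' i, B i ^ p) ^ (1 / p) := by
  have hp' : 0 < p' := hpp'.symm.pos
  have hq : 0 < q := hpp'.pos.trans_le hpq
  set e := (α + β)⁻¹ with he
  have ht : e / p' + e / q = 1 := by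
    rw [div_eq_mul_one_div, div_eq_mul_one_div e q, ← mul_add, hs]
    exact inv_mul_cancel₀ (by positivity)
  have htp : 0 < e / p' := by positivity
  have htq : 0 < e / q := by positivity
  obtain ⟨C₁, hC₁, h₁⟩ := tsum_normalized_eTker_mul_rpow_le hα hβ htq (by linarith)
  obtain ⟨C₂, hC₂, h₂⟩ := tsum_normalized_eTker_mul_rpow_le hα hβ htp (by linarith)
  rw [← he] at h₁ h₂
  set w : ℤ → ℝ≥0∞ := fun i => (natAbsMaxOne i : ℝ≥0∞) ^ (-(e / (p' * q)))
  have hw : ∀ i (r : ℝ), r ≠ 0 → w i ^ r = (natAbsMaxOne i : ℝ≥0∞) ^ (-(e / (p' * q / r))) := by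
    intro i r hr
    simp only [w, ← ENNReal.rpow_mul]
    congr 1
    field_simp
  refine ⟨C₁ ^ (1 / p') * C₂ ^ (1 / q), by finiteness, fun B =>
    ENNReal.Lq_tsum_mul_le_of_schur (t := e / p') (u := w) (v := w) hpp' hpq htp.le (by linarith)
      (fun i => by simp [w, natAbsMaxOne]) (fun i => by simp [w, natAbsMaxOne])
      (fun j => ?_) (fun i => ?_) B⟩
  · simpa only [div_mul_cancel₀ _ hp'.ne', hw _ p' hp'.ne', mul_div_cancel_left₀ q hp'.ne']
      using h₁ j
  · simpa only [show (1 - e / p') * q = e by rw [show 1 - e / p' = e / q by linarith,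
        div_mul_cancel₀ _ hq.ne'], eTker_comm α β i, hw _ q hq.ne', mul_div_cancel_right₀ p' hq.ne']
      using h₂ i

theorem stmt6_general (γ α β p q : ℝ) (hγ0 : 0 ≤ γ) (hα : 0 < α) (hβ : 0 < β)
    (hαβ : α + β = 1 - γ) (hp : 1 < p) (hpγ : p * γ < 1) (hq : 1 / q = 1 / p - γ) :
    ∃ C : ℝ, 0 < C ∧ ∀ b : ℤ → ℂ, Summable (fun i : ℤ => ‖b i‖ ^ p) →
      (∑' j : ℤ, (∑' i : ℤ, eTker α β i j * (‖b i‖₊ : ℝ≥0∞)) ^ q) ^ (1 / q) ≤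
        ENNReal.ofReal C * (∑' i : ℤ, (‖b i‖₊ : ℝ≥0∞) ^ p) ^ (1 / p) := by
  have hpp' : p.HolderConjugate p.conjExponent := .conjExponent hp
  have hq₀ : 0 < q := one_div_pos.1 <| by
    rw [hq, sub_pos, lt_div_iff₀ (by linarith)]
    linarith
  have hpq : p ≤ q := (one_div_le_one_div hq₀ (by linarith)).1 (by linarith)
  obtain ⟨C, hC, hT⟩ := Lq_tsum_eTker_mul_le hα hβ hpp' hpq
    (by linarith [hpp'.one_div_add_one_div])
  refine ⟨C.toReal + 1, by positivity, fun b _ => (hT _).trans ?_⟩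
  gcongr
  rw [ENNReal.le_ofReal_iff_toReal_le hC (by positivity)]
  linarith

/-- **`ℓ^p(ℤ) → ℓ^q(ℤ)` boundedness of `T_{α,β}` for `1 < p < γ⁻¹`.**
Let `0 ≤ γ < 1`, `α, β > 0` with `α + β = 1 - γ`, `1 < p < γ⁻¹` (expressed as `p·γ < 1`,
so that `γ⁻¹ = ∞` when `γ = 0`) and `1/q = 1/p - γ`. Then there is `C > 0`, depending
only on `α, β, p, q`, such that for all `b ∈ ℓ^p(ℤ)`:
`(∑_j (∑_{i ≠ ±j} |b(i)|/(|i-j|^α |i+j|^β))^q)^{1/q} ≤ C ‖b‖_{ℓ^p(ℤ)}`. -/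
theorem stmt6 (γ α β p q : ℝ) (hγ0 : 0 ≤ γ) (hγ1 : γ < 1) (hα : 0 < α) (hβ : 0 < β)
    (hαβ : α + β = 1 - γ) (hp : 1 < p) (hpγ : p * γ < 1) (hq : 1 / q = 1 / p - γ) :
    ∃ C : ℝ, 0 < C ∧ ∀ b : ℤ → ℂ, Summable (fun i : ℤ => ‖b i‖ ^ p) →
      (∑' j : ℤ, (∑' i : ℤ, eTker α β i j * (‖b i‖₊ : ℝ≥0∞)) ^ q) ^ (1 / q) ≤
        ENNReal.ofReal C * (∑' i : ℤ, (‖b i‖₊ : ℝ≥0∞) ^ p) ^ (1 / p) :=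
  stmt6_general γ α β p q hγ0 hα hβ hαβ hp hpγ hq
end

section
/- Let 0 ≤ γ < 1 and α, β > 0 with α + β = 1 − γ. For every 0 < p ≤ ∞ and every 0 < q ≤ 1/(1−γ), the operator T_{α,β} is not bounded from ℓ^p(ℤ) into ℓ^q(ℤ): for the sequence b with b(0) = 1 and b(i) = 0 for i ≠ 0, one has b ∈ ℓ^p(ℤ), (T_{α,β} b)(0) = 0 and (T_{α,β} b)(j) = |j|^{γ−1} for all j ≠ 0, and this sequence T_{α,β} b does not belong to ℓ^q(ℤ). -/
/-!
Applied to the unit impulse at `0`, the operator picks out the column `i = 0` of its kernel,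
`1 / (|j|^α |j|^β) = |j|^{γ-1}`. Raised to the power `q ≤ 1/(1-γ)` this is at least `1/|j|`,
so it is not `q`-summable, while the impulse has `ℓ^p` norm `1`; any bound
`‖T b‖_q ≤ C ‖b‖_p` would then give `∞ ≤ C`.
-/

open scoped ENNReal NNReal BigOperators

/-- The `ℓ^p(ℤ)` "norm" (with values in `[0,∞]`) of a `[0,∞]`-valued sequence,
for `p ∈ (0,∞]`: for finite `p` it is `(∑_i f(i)^p)^{1/p}`, for `p = ∞` it is `sup_i f(i)`. -/
noncomputable def elpNorm (p : ℝ≥0∞) (f : ℤ → ℝ≥0∞) : ℝ≥0∞ :=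
  if p = ∞ then ⨆ i, f i else (∑' i : ℤ, f i ^ p.toReal) ^ (1 / p.toReal)

/-- The fractional series operator
`(T_{α,β} b)(j) = ∑_{i ≠ ±j} b(i) / (|i-j|^α |i+j|^β)`. -/
noncomputable def Tfrac (α β : ℝ) (b : ℤ → ℂ) (j : ℤ) : ℂ :=
  ∑' i : ℤ, (Tker α β i j : ℂ) * b i

theorem elpNorm_nnnorm_ite_zero {p : ℝ≥0∞} (hp : 0 < p) :
    elpNorm p (fun i => (‖(if i = 0 then 1 else 0 : ℂ)‖₊ : ℝ≥0∞)) = 1 := by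
  unfold elpNorm
  split_ifs with hp_top
  · refine le_antisymm (iSup_le fun i => ?_) (le_iSup_of_le 0 (by simp))
    by_cases hi : i = 0 <;> simp [hi]
  · have hp_pos : 0 < p.toReal := ENNReal.toReal_pos hp.ne' hp_top
    rw [tsum_eq_single 0 fun i hi => by simp [hi, ENNReal.zero_rpow_of_pos hp_pos]]
    simp

theorem Tfrac_ite_zero (α β : ℝ) (j : ℤ) :
    Tfrac α β (fun i => if i = 0 then 1 else 0) j = Tker α β 0 j := by
  rw [Tfrac, tsum_eq_single 0 fun i hi => by simp [hi]]
  simp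

theorem Tker_zero_zero (α β : ℝ) : Tker α β 0 0 = 0 := by
  simp [Tker]

theorem Tker_zero_left (α β : ℝ) {j : ℤ} (hj : j ≠ 0) :
    Tker α β 0 j = |(j : ℝ)| ^ (-(α + β)) := by
  have hj_abs : 0 < |(j : ℝ)| := abs_pos.mpr (Int.cast_ne_zero.mpr hj)
  rw [Tker, if_neg (by omega)]
  simp only [Int.cast_zero, zero_sub, abs_neg, zero_add]
  rw [← Real.rpow_add hj_abs, Real.rpow_neg hj_abs.le, one_div]

theorem not_summable_of_eq_abs_rpow {r : ℝ} (hr : -1 ≤ r) {f : ℤ → ℝ}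
    (hf : ∀ j ≠ 0, f j = |(j : ℝ)| ^ r) : ¬ Summable f := by
  intro hs
  have hnat : Summable fun n : ℕ => (n : ℝ) ^ r :=
    (hs.comp_injective Nat.cast_injective).congr_cofinite <|
      (Filter.eventually_cofinite_ne 0).mono fun n hn => by
        simp [hf n (by exact_mod_cast hn)]
  exact (Real.summable_nat_rpow.mp hnat).not_ge hr

theorem ENNReal.tsum_nnnorm_rpow_eq_top {ι E : Type*} [SeminormedAddCommGroup E] {f : ι → E}
    {q : ℝ} (hq : 0 ≤ q) (hf : ¬ Summable fun i => ‖f i‖ ^ q) :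
    ∑' i, (‖f i‖₊ : ℝ≥0∞) ^ q = ∞ := by
  simp_rw [← ENNReal.coe_rpow_of_nonneg _ hq]
  exact ENNReal.tsum_coe_eq_top_iff_not_summable_coe.mpr (by simpa [NNReal.coe_rpow] using hf)

theorem stmt8_general (γ α β : ℝ) (hγ1 : γ < 1)
    (hαβ : α + β = 1 - γ) (p : ℝ≥0∞) (hp : 0 < p) (q : ℝ) (hq0 : 0 < q)
    (hq1 : q ≤ 1 / (1 - γ)) (b : ℤ → ℂ) (hb : b = fun i => if i = 0 then 1 else 0) :
    elpNorm p (fun i => (‖b i‖₊ : ℝ≥0∞)) ≠ ∞ ∧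
    Tfrac α β b 0 = 0 ∧
    (∀ j : ℤ, j ≠ 0 → Tfrac α β b j = ((|(j : ℝ)| ^ (γ - 1) : ℝ) : ℂ)) ∧
    ¬ Summable (fun j : ℤ => ‖Tfrac α β b j‖ ^ q) ∧
    ¬ ∃ C : ℝ≥0∞, 0 < C ∧ C ≠ ∞ ∧ ∀ c : ℤ → ℂ,
        elpNorm p (fun i => (‖c i‖₊ : ℝ≥0∞)) ≠ ∞ →
          (∑' j : ℤ, (‖Tfrac α β c j‖₊ : ℝ≥0∞) ^ q) ^ (1 / q) ≤
            C * elpNorm p (fun i => (‖c i‖₊ : ℝ≥0∞)) := by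
  have hb_fin : elpNorm p (fun i => (‖b i‖₊ : ℝ≥0∞)) ≠ ∞ := by
    simp only [hb, elpNorm_nnnorm_ite_zero hp, ne_eq, ENNReal.one_ne_top, not_false_eq_true]
  have hT_zero : Tfrac α β b 0 = 0 := by
    rw [hb, Tfrac_ite_zero, Tker_zero_zero, Complex.ofReal_zero]
  have hT_ne : ∀ j : ℤ, j ≠ 0 → Tfrac α β b j = ((|(j : ℝ)| ^ (γ - 1) : ℝ) : ℂ) := by
    intro j hj
    rw [hb, Tfrac_ite_zero, Tker_zero_left α β hj, hαβ, neg_sub]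
  have hr : -1 ≤ (γ - 1) * q := by
    linarith [(le_div_iff₀ (sub_pos.mpr hγ1)).mp hq1]
  have hT_not_summable : ¬ Summable fun j : ℤ => ‖Tfrac α β b j‖ ^ q :=
    not_summable_of_eq_abs_rpow hr fun j hj => by
      rw [hT_ne j hj, Complex.norm_real, Real.norm_of_nonneg (by positivity),
        ← Real.rpow_mul (abs_nonneg _)]
  refine ⟨hb_fin, hT_zero, hT_ne, hT_not_summable, ?_⟩
  rintro ⟨C, -, hC, hbound⟩
  have h := hbound b hb_fin
  rw [ENNReal.tsum_nnnorm_rpow_eq_top hq0.le hT_not_summable,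
    ENNReal.top_rpow_of_pos (by positivity), top_le_iff] at h
  exact ENNReal.mul_ne_top hC hb_fin h

/-- **`T_{α,β}` is unbounded from `ℓ^p(ℤ)` to `ℓ^q(ℤ)` for `0 < p ≤ ∞`, `0 < q ≤ 1/(1-γ)`.**
For the sequence `b` with `b(0) = 1` and `b(i) = 0` for `i ≠ 0`: `b ∈ ℓ^p(ℤ)`,
`(T_{α,β} b)(0) = 0`, `(T_{α,β} b)(j) = |j|^{γ-1}` for all `j ≠ 0`, the sequence
`T_{α,β} b` does not belong to `ℓ^q(ℤ)`, and `T_{α,β}` is not bounded from `ℓ^p(ℤ)`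
into `ℓ^q(ℤ)`. -/
theorem stmt8 (γ α β : ℝ) (hγ0 : 0 ≤ γ) (hγ1 : γ < 1) (hα : 0 < α) (hβ : 0 < β)
    (hαβ : α + β = 1 - γ) (p : ℝ≥0∞) (hp : 0 < p) (q : ℝ) (hq0 : 0 < q)
    (hq1 : q ≤ 1 / (1 - γ)) (b : ℤ → ℂ) (hb : b = fun i => if i = 0 then 1 else 0) :
    elpNorm p (fun i => (‖b i‖₊ : ℝ≥0∞)) ≠ ∞ ∧
    Tfrac α β b 0 = 0 ∧
    (∀ j : ℤ, j ≠ 0 → Tfrac α β b j = ((|(j : ℝ)| ^ (γ - 1) : ℝ) : ℂ)) ∧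
    ¬ Summable (fun j : ℤ => ‖Tfrac α β b j‖ ^ q) ∧
    ¬ ∃ C : ℝ≥0∞, 0 < C ∧ C ≠ ∞ ∧ ∀ c : ℤ → ℂ,
        elpNorm p (fun i => (‖c i‖₊ : ℝ≥0∞)) ≠ ∞ →
          (∑' j : ℤ, (‖Tfrac α β c j‖₊ : ℝ≥0∞) ^ q) ^ (1 / q) ≤
            C * elpNorm p (fun i => (‖c i‖₊ : ℝ≥0∞)) :=
  stmt8_general γ α β hγ1 hαβ p hp q hq0 hq1 b hb
end

section
/- Let 0 < γ < 1 and α, β > 0 with α + β = 1 − γ. Define the sequence b by b(i) = 0 for |i| ≤ 1 and b(i) = 1/(|i|^γ log|i|) for |i| ≥ 2. Then b ∈ ℓ^p(ℤ) for every p with 1/γ ≤ p ≤ ∞, and for every j ∈ ℤ the series ∑_{i∈ℤ, i≠j, i≠−j} b(i)/(|i−j|^α |i+j|^β) diverges to +∞ (the family is not summable). Consequently T_{α,β} is not bounded from ℓ^p(ℤ) into ℓ^q(ℤ) for any 1/γ ≤ p ≤ ∞ and 0 < q ≤ ∞. -/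
open scoped ENNReal NNReal BigOperators

/-- The sequence `b(i) = 1/(|i|^γ log|i|)` for `|i| ≥ 2` and `b(i) = 0` for `|i| ≤ 1`. -/
noncomputable def logSeq (γ : ℝ) : ℤ → ℂ := fun i =>
  if 2 ≤ |i| then ((1 / (|(i : ℝ)| ^ γ * Real.log |(i : ℝ)|) : ℝ) : ℂ) else 0

/-!
Write `b = logSeq γ`, so that `‖b i‖ = 1 / (|i|^γ log |i|)`. For finite `p ≥ 1/γ` we have
`γ p ≥ 1`, hence `‖b n‖^p ≤ 1 / (n (log n)^p)`, a convergent Bertrand series because `p > 1`;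
the case `p = ∞` follows from any finite one. For `i > |j|` both `|i - j|` and `|i + j|` are at
most `2i`, so the kernel is at least `(2i)^(γ-1)` and the `i`-th term of the series at `j` is at
least `1 / (2 i log i)`, the general term of a divergent Bertrand series. Both Bertrand facts come
from Cauchy condensation. Finally, the truncations of `|b|` to finite sets have `ℓ^p` norms below
`‖b‖_p`, while `|T c(j)| ≤ ‖T c‖_q` exceeds every bound on them.
-/

open Real Filter

theorem summable_one_div_nat_mul_log_rpow_iff {r : ℝ} (hr : 0 ≤ r) :
    (Summable fun n : ℕ => 1 / ((n : ℝ) * log n ^ r)) ↔ 1 < r := by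
  have hlog2 : 0 < log 2 ^ r := rpow_pos_of_pos (log_pos one_lt_two) r
  have hcondensed : (fun k : ℕ => (2 : ℝ) ^ k * (1 / (((2 ^ k : ℕ) : ℝ) * log (2 ^ k : ℕ) ^ r))) =
      fun k : ℕ => (log 2 ^ r)⁻¹ * (1 / (k : ℝ) ^ r) := by
    ext k
    rw [Nat.cast_pow, Nat.cast_ofNat, Real.log_pow,
      Real.mul_rpow (Nat.cast_nonneg k) (log_nonneg one_le_two), mul_one_div, ← div_div,
      div_self (pow_ne_zero _ two_ne_zero)]
    ring
  rw [← summable_condensed_iff_of_eventually_nonneg, hcondensed,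
    summable_mul_left_iff (inv_ne_zero hlog2.ne'), Real.summable_one_div_nat_rpow]
  · exact Eventually.of_forall fun n => by
      have := log_natCast_nonneg n
      positivity
  · filter_upwards [eventually_ge_atTop 2] with n hn
    have hn' : (2 : ℝ) ≤ n := by exact_mod_cast hn
    have := log_pos (one_lt_two.trans_le hn')
    gcongr <;> norm_num

section elpNorm

variable {p q : ℝ≥0∞}

theorem elpNorm_mono {f g : ℤ → ℝ≥0∞} (h : f ≤ g) : elpNorm p f ≤ elpNorm p g := by
  unfold elpNorm
  split_ifs
  · exact iSup_mono h
  · gcongr with i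
    exact h i

theorem le_elpNorm (hq : 0 < q) (f : ℤ → ℝ≥0∞) (j : ℤ) : f j ≤ elpNorm q f := by
  unfold elpNorm
  split_ifs with hq'
  · exact le_iSup f j
  · have hq0 : q.toReal ≠ 0 := (ENNReal.toReal_pos hq.ne' hq').ne'
    calc f j = (f j ^ q.toReal) ^ (1 / q.toReal) := by
          rw [← ENNReal.rpow_mul, mul_one_div_cancel hq0, ENNReal.rpow_one]
      _ ≤ _ := by gcongr; exact ENNReal.le_tsum j

theorem elpNorm_top_le (hq : 0 < q) (f : ℤ → ℝ≥0∞) : elpNorm ∞ f ≤ elpNorm q f := by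
  rw [elpNorm, if_pos rfl]
  exact iSup_le (le_elpNorm hq f)

theorem elpNorm_ne_top_of_summable (hp : p ≠ ∞) {b : ℤ → ℂ}
    (hb : Summable fun i => ‖b i‖ ^ p.toReal) : elpNorm p (fun i => (‖b i‖₊ : ℝ≥0∞)) ≠ ∞ := by
  rw [elpNorm, if_neg hp]
  refine ENNReal.rpow_ne_top_of_nonneg (by positivity) ?_
  convert hb.tsum_ofReal_ne_top using 3 with i
  rw [← ENNReal.ofReal_rpow_of_nonneg (norm_nonneg _) ENNReal.toReal_nonneg, ofReal_norm,
    enorm_eq_nnnorm]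

end elpNorm

section logSeq

/-- For `|i| ≤ 1` the right-hand side is the junk value `1 / 0 = 0`, as `log 0 = log 1 = 0`. -/
theorem norm_logSeq (γ : ℝ) (i : ℤ) : ‖logSeq γ i‖ = 1 / (|(i : ℝ)| ^ γ * log |(i : ℝ)|) := by
  unfold logSeq
  split_ifs with hi
  · have hi' : (2 : ℝ) ≤ |(i : ℝ)| := by rw [← Int.cast_abs]; exact_mod_cast hi
    have := log_pos (one_lt_two.trans_le hi')
    rw [Complex.norm_real, norm_of_nonneg (by positivity)]
  · have hlog : log |(i : ℝ)| = 0 := by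
      rw [← Int.cast_abs, Real.log_eq_zero]
      have : |i| = 0 ∨ |i| = 1 := by have := abs_nonneg i; omega
      rcases this with h | h <;> simp [h]
    simp [hlog]

variable {γ : ℝ}

theorem summable_norm_logSeq_rpow {r : ℝ} (hr : 1 < r) (hγr : 1 ≤ γ * r) :
    Summable fun i : ℤ => ‖logSeq γ i‖ ^ r := by
  have hnat : Summable fun n : ℕ => (1 / ((n : ℝ) ^ γ * log n)) ^ r := by
    refine .of_nonneg_of_le (fun n => ?_) (fun n => ?_)
      ((summable_one_div_nat_mul_log_rpow_iff (by linarith)).2 hr)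
    · have := log_natCast_nonneg n
      positivity
    · rcases le_or_gt n 1 with hn | hn
      · have : log n = 0 := by interval_cases n <;> simp
        simp [this, zero_rpow (by linarith : r ≠ 0)]
      · have hn' : (2 : ℝ) ≤ n := by exact_mod_cast hn
        have := log_pos (one_lt_two.trans_le hn')
        rw [div_rpow zero_le_one (by positivity), one_rpow,
          mul_rpow (by positivity) this.le, ← rpow_mul (by positivity)]
        gcongr
        exact self_le_rpow_of_one_le (by linarith) hγr
  refine .of_nat_of_neg ?_ ?_ <;> simpa [norm_logSeq] using hnat

theorem elpNorm_logSeq_ne_top (hγ0 : 0 < γ) (hγ1 : γ < 1) {p : ℝ≥0∞}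
    (hp : ENNReal.ofReal (1 / γ) ≤ p) : elpNorm p (fun i => (‖logSeq γ i‖₊ : ℝ≥0∞)) ≠ ∞ := by
  have of_ne_top : ∀ p : ℝ≥0∞, ENNReal.ofReal (1 / γ) ≤ p → p ≠ ∞ →
      elpNorm p (fun i => (‖logSeq γ i‖₊ : ℝ≥0∞)) ≠ ∞ := by
    intro p hp hp_top
    have hr : 1 / γ ≤ p.toReal :=
      (ENNReal.ofReal_le_iff_le_toReal hp_top).1 hp
    refine elpNorm_ne_top_of_summable hp_top (summable_norm_logSeq_rpow ?_ ?_)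
    · exact ((one_lt_div hγ0).2 hγ1).trans_le hr
    · rwa [div_le_iff₀' hγ0] at hr
  rcases eq_or_ne p ∞ with rfl | hp_top
  · refine ne_top_of_le_ne_top (of_ne_top _ le_rfl ENNReal.ofReal_ne_top) (elpNorm_top_le ?_ _)
    exact ENNReal.ofReal_pos.2 (by positivity)
  · exact of_ne_top p hp hp_top

end logSeq

section Tker

variable {α β γ : ℝ}

theorem Tker_nonneg (α β : ℝ) (i j : ℤ) : 0 ≤ Tker α β i j := by
  unfold Tker
  split_ifs <;> positivity

theorem one_div_rpow_le_Tker (hα : 0 ≤ α) (hβ : 0 ≤ β) {i j : ℤ} (hij : |j| < i) :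
    1 / (2 * (i : ℝ)) ^ (α + β) ≤ Tker α β i j := by
  obtain ⟨hj₁, hj₂⟩ := abs_lt.1 hij
  have hj₁' : -(i : ℝ) < j := by exact_mod_cast hj₁
  have hj₂' : (j : ℝ) < i := by exact_mod_cast hj₂
  have hsub : 0 < (i : ℝ) - j := by linarith
  have hadd : 0 < (i : ℝ) + j := by linarith
  rw [Tker, if_neg (by omega), abs_of_pos hsub, abs_of_pos hadd, rpow_add (by linarith)]
  apply one_div_le_one_div_of_le (mul_pos (rpow_pos_of_pos hsub α) (rpow_pos_of_pos hadd β))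
  exact mul_le_mul (rpow_le_rpow hsub.le (by linarith) hα) (rpow_le_rpow hadd.le (by linarith) hβ)
    (rpow_nonneg hadd.le β) (rpow_nonneg (by linarith) α)

theorem one_div_le_Tker_mul_norm_logSeq (hγ : 0 ≤ γ) (hα : 0 ≤ α) (hβ : 0 ≤ β)
    (hαβ : α + β = 1 - γ) {i j : ℤ} (hij : |j| < i) :
    1 / (2 * ((i : ℝ) * log i)) ≤ Tker α β i j * ‖logSeq γ i‖ := by
  have hi : (1 : ℝ) ≤ i := by exact_mod_cast (abs_nonneg j).trans_lt hij
  rw [norm_logSeq, abs_of_pos (by linarith)]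
  rcases (log_nonneg hi).eq_or_lt with hlog | hlog
  · simp [← hlog]
  have hscale : (2 * (i : ℝ)) ^ (1 - γ) * (i : ℝ) ^ γ ≤ 2 * i := by
    rw [mul_rpow zero_le_two (by linarith), mul_assoc, ← rpow_add (by linarith), sub_add_cancel,
      rpow_one]
    gcongr
    exact rpow_le_self_of_one_le one_le_two (by linarith)
  calc 1 / (2 * ((i : ℝ) * log i))
      ≤ 1 / (2 * (i : ℝ)) ^ (α + β) * (1 / ((i : ℝ) ^ γ * log i)) := by
        rw [hαβ, one_div_mul_one_div, ← mul_assoc]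
        apply one_div_le_one_div_of_le (by positivity)
        nlinarith
    _ ≤ Tker α β i j * (1 / ((i : ℝ) ^ γ * log i)) := by
        gcongr
        exact one_div_rpow_le_Tker hα hβ hij

theorem not_summable_Tker_mul_norm_logSeq (hγ : 0 ≤ γ) (hα : 0 ≤ α) (hβ : 0 ≤ β)
    (hαβ : α + β = 1 - γ) (j : ℤ) :
    ¬ Summable fun i : ℤ => Tker α β i j * ‖logSeq γ i‖ := by
  intro h
  have hdiv : ¬ Summable fun n : ℕ => 1 / ((n : ℝ) * log n) := by
    simpa using (summable_one_div_nat_mul_log_rpow_iff zero_le_one).not.2 (lt_irrefl 1)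
  refine hdiv <| (summable_mul_left_iff (inv_ne_zero two_ne_zero)).1 ?_
  refine (h.comp_injective Nat.cast_injective).of_norm_bounded_eventually_nat ?_
  filter_upwards [eventually_gt_atTop j.natAbs] with n hn
  have hlog := log_natCast_nonneg n
  rw [norm_of_nonneg (by positivity), ← one_div, one_div_mul_one_div]
  refine one_div_le_Tker_mul_norm_logSeq hγ hα hβ hαβ ?_
  rw [Int.abs_eq_natAbs]
  exact_mod_cast hn

end Tker

theorem not_exists_elpNorm_Tfrac_le {α β : ℝ} {p q : ℝ≥0∞} (hq : 0 < q) {b : ℤ → ℂ}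
    (hb : elpNorm p (fun i => (‖b i‖₊ : ℝ≥0∞)) ≠ ∞) {j : ℤ}
    (hj : ¬ Summable fun i => Tker α β i j * ‖b i‖) :
    ¬ ∃ C : ℝ≥0∞, 0 < C ∧ C ≠ ∞ ∧ ∀ c : ℤ → ℂ,
        elpNorm p (fun i => (‖c i‖₊ : ℝ≥0∞)) ≠ ∞ →
          elpNorm q (fun j => (‖Tfrac α β c j‖₊ : ℝ≥0∞)) ≤
            C * elpNorm p (fun i => (‖c i‖₊ : ℝ≥0∞)) := by
  rintro ⟨C, -, hC, hbound⟩
  set B := elpNorm p (fun i => (‖b i‖₊ : ℝ≥0∞))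
  obtain ⟨s, hs⟩ : ∃ s : Finset ℤ, (C * B).toReal < ∑ i ∈ s, Tker α β i j * ‖b i‖ := by
    by_contra! h
    exact hj (summable_of_sum_le (fun i => mul_nonneg (Tker_nonneg α β i j) (norm_nonneg _)) h)
  set c : ℤ → ℂ := fun i => if i ∈ s then (‖b i‖ : ℂ) else 0
  have hc : elpNorm p (fun i => (‖c i‖₊ : ℝ≥0∞)) ≤ B :=
    elpNorm_mono fun i => by by_cases hi : i ∈ s <;> simp [c, hi]
  have hTc : Tfrac α β c j = ((∑ i ∈ s, Tker α β i j * ‖b i‖ : ℝ) : ℂ) := by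
    rw [Tfrac, tsum_eq_sum (s := s) fun i hi => by simp [c, hi]]
    push_cast
    exact Finset.sum_congr rfl fun i hi => by simp [c, hi]
  have hle : (‖Tfrac α β c j‖₊ : ℝ≥0∞) ≤ C * B :=
    (le_elpNorm hq _ j).trans ((hbound c (ne_top_of_le_ne_top hb hc)).trans (by gcongr))
  have := ENNReal.toReal_mono (ENNReal.mul_ne_top hC hb) hle
  rw [ENNReal.coe_toReal, coe_nnnorm, hTc, Complex.norm_real, norm_of_nonneg
    (Finset.sum_nonneg fun i _ => mul_nonneg (Tker_nonneg α β i j) (norm_nonneg _))] at this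
  linarith

/-- **`T_{α,β}` is unbounded from `ℓ^p(ℤ)` for `1/γ ≤ p ≤ ∞`.**
Let `0 < γ < 1` and `α, β > 0` with `α + β = 1 - γ`. The sequence
`b(i) = 1/(|i|^γ log|i|)` (for `|i| ≥ 2`, zero otherwise) belongs to `ℓ^p(ℤ)` for every
`1/γ ≤ p ≤ ∞`, while for every `j ∈ ℤ` the series `∑_{i ≠ ±j} b(i)/(|i-j|^α |i+j|^β)`
is not summable (it diverges to `+∞`). Consequently `T_{α,β}` is not bounded from
`ℓ^p(ℤ)` into `ℓ^q(ℤ)` for any `1/γ ≤ p ≤ ∞` and `0 < q ≤ ∞`. -/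
theorem stmt9 (γ α β : ℝ) (hγ0 : 0 < γ) (hγ1 : γ < 1) (hα : 0 < α) (hβ : 0 < β)
    (hαβ : α + β = 1 - γ) :
    (∀ p : ℝ≥0∞, ENNReal.ofReal (1 / γ) ≤ p →
      elpNorm p (fun i => (‖logSeq γ i‖₊ : ℝ≥0∞)) ≠ ∞) ∧
    (∀ j : ℤ, ¬ Summable (fun i : ℤ => Tker α β i j * ‖logSeq γ i‖)) ∧
    (∀ p : ℝ≥0∞, ENNReal.ofReal (1 / γ) ≤ p → ∀ q : ℝ≥0∞, 0 < q →
      ¬ ∃ C : ℝ≥0∞, 0 < C ∧ C ≠ ∞ ∧ ∀ c : ℤ → ℂ,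
          elpNorm p (fun i => (‖c i‖₊ : ℝ≥0∞)) ≠ ∞ →
            elpNorm q (fun j => (‖Tfrac α β c j‖₊ : ℝ≥0∞)) ≤
              C * elpNorm p (fun i => (‖c i‖₊ : ℝ≥0∞))) := by
  refine ⟨fun p hp => elpNorm_logSeq_ne_top hγ0 hγ1 hp,
    not_summable_Tker_mul_norm_logSeq hγ0.le hα.le hβ.le hαβ, fun p hp q hq => ?_⟩
  exact not_exists_elpNorm_Tfrac_le hq (elpNorm_logSeq_ne_top hγ0 hγ1 hp)
    (not_summable_Tker_mul_norm_logSeq hγ0.le hα.le hβ.le hαβ 0)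
end

section
/- Let α, β > 0 with α + β = 1. There exists a constant C > 0, depending only on α, such that for every complex sequence b = {b(i)}_{i∈ℤ} and every j₀ ∈ ℤ with j₀ ≠ 0: ∑_{i ∈ ℤ, 0 < |i − j₀| ≤ |j₀|} |b(i)| / (|i − j₀|^α |i + j₀|^β) ≤ C (Mb)(j₀). -/
open scoped ENNReal NNReal BigOperators

/-- The centered discrete maximal operator:
`(Mb)(j) = sup_{N ∈ ℕ₀} (2N+1)⁻¹ ∑_{|i-j| ≤ N} |b(i)|`, with values in `[0,∞]`. -/
noncomputable def maxOp (b : ℤ → ℂ) (j : ℤ) : ℝ≥0∞ :=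
  ⨆ N : ℕ, (∑ i ∈ Finset.Icc (j - N) (j + N), (‖b i‖₊ : ℝ≥0∞)) / (2 * (N : ℝ≥0∞) + 1)

/-
Since `|i + j₀| ≥ |j₀|` on the range of summation, the sum is at most `|j₀|^(-β)` times
`∑_{|i - j₀| ≤ |j₀|} |b(i)| w(|i - j₀|)` with the decreasing weight `w(d) = max(d, 1)^(-α)`
(the `max` only matters at `d = 0`, a term absent from the original sum).
By Abel summation, a sum against a decreasing nonnegative weight only grows when the partial sums
of the coefficients are replaced by larger ones. The partial sums `∑_{|i - j₀| ≤ N} |b(i)|` are at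
most `(2N + 1) Mb(j₀) ≤ 2(N + 1) Mb(j₀)`, so the weighted sum is at most
`2 Mb(j₀) ∑_{d ≤ |j₀|} w(d) ≤ 2 Mb(j₀) (1 + |j₀|^β / β)`, using `β d^(-α) ≤ d^β - (d - 1)^β`.
-/
open Finset

theorem sum_mul_le_sum_mul_of_partial_sums_le {a c w : ℕ → ℝ} {J : ℕ} (hw : Antitone w)
    (hwJ : 0 ≤ w J) (h : ∀ N ≤ J, ∑ n ∈ range (N + 1), a n ≤ ∑ n ∈ range (N + 1), c n) :
    ∑ n ∈ range (J + 1), a n * w n ≤ ∑ n ∈ range (J + 1), c n * w n := by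
  have hG : ∀ N ≤ J, ∑ n ∈ range (N + 1), (a - c) n ≤ 0 := fun N hN => by
    simpa [sum_sub_distrib] using h N hN
  have abel := sum_range_by_parts w (a - c) (J + 1)
  simp only [smul_eq_mul, add_tsub_cancel_right, Pi.sub_apply] at abel
  rw [← sub_nonpos, ← sum_sub_distrib,
    sum_congr rfl fun n _ => (by ring : a n * w n - c n * w n = w n * (a n - c n)), abel]
  have hlast : w J * ∑ n ∈ range (J + 1), (a n - c n) ≤ 0 :=
    mul_nonpos_of_nonneg_of_nonpos hwJ (by simpa using hG J le_rfl)
  have hrest : 0 ≤ ∑ i ∈ range J, (w (i + 1) - w i) * ∑ n ∈ range (i + 1), (a n - c n) :=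
    sum_nonneg fun i hi => mul_nonneg_of_nonpos_of_nonpos
      (sub_nonpos.2 (hw i.le_succ)) (by simpa using hG i (mem_range.1 hi).le)
  linarith

theorem sum_mul_le_sum_mul_of_sum_filter_le {ι : Type*} {s : Finset ι} {d : ι → ℕ} {g : ι → ℝ}
    {c w : ℕ → ℝ} {J : ℕ} (hd : ∀ i ∈ s, d i ≤ J) (hw : Antitone w) (hwJ : 0 ≤ w J)
    (h : ∀ N ≤ J, ∑ i ∈ s with d i ≤ N, g i ≤ ∑ n ∈ range (N + 1), c n) :
    ∑ i ∈ s, g i * w (d i) ≤ ∑ n ∈ range (J + 1), c n * w n := by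
  have hfiber : ∀ N, ∑ n ∈ range (N + 1), ∑ i ∈ s with d i = n, g i = ∑ i ∈ s with d i ≤ N, g i := by
    intro N
    rw [← sum_fiberwise_of_maps_to (t := range (N + 1)) (g := d)
      (fun i hi => mem_range_succ_iff.2 (mem_filter.1 hi).2)]
    refine sum_congr rfl fun n hn => sum_congr ?_ fun _ _ => rfl
    ext i
    simp only [mem_filter, mem_range_succ_iff] at hn ⊢
    constructor
    · rintro ⟨hi, rfl⟩; exact ⟨⟨hi, hn⟩, rfl⟩
    · rintro ⟨⟨hi, -⟩, rfl⟩; exact ⟨hi, rfl⟩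
  calc ∑ i ∈ s, g i * w (d i)
      = ∑ n ∈ range (J + 1), (∑ i ∈ s with d i = n, g i) * w n := by
        rw [← sum_fiberwise_of_maps_to (t := range (J + 1)) (g := d)
          (fun i hi => mem_range_succ_iff.2 (hd i hi))]
        refine sum_congr rfl fun n _ => ?_
        rw [sum_mul]
        exact sum_congr rfl fun i hi => by rw [(mem_filter.1 hi).2]
    _ ≤ ∑ n ∈ range (J + 1), c n * w n :=
        sum_mul_le_sum_mul_of_partial_sums_le hw hwJ fun N hN => (hfiber N).trans_le (h N hN)

theorem mul_rpow_sub_one_le_rpow_sub_rpow {γ x : ℝ} (hγ₀ : 0 ≤ γ) (hγ₁ : γ ≤ 1) (hx : 0 ≤ x) :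
    γ * (x + 1) ^ (γ - 1) ≤ (x + 1) ^ γ - x ^ γ := by
  have hx₁ : 0 < x + 1 := by linarith
  have hinv : (x + 1)⁻¹ ≤ 1 := inv_le_one_of_one_le₀ (by linarith)
  have bernoulli := rpow_one_add_le_one_add_mul_self (s := -(x + 1)⁻¹) (by linarith) hγ₀ hγ₁
  have hsplit : x ^ γ = (x + 1) ^ γ * (1 + -(x + 1)⁻¹) ^ γ := by
    rw [← Real.mul_rpow hx₁.le (by linarith)]
    congr 1; field_simp; ring
  rw [hsplit, Real.rpow_sub_one hx₁.ne']
  have := mul_le_mul_of_nonneg_left bernoulli (Real.rpow_nonneg hx₁.le γ)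
  calc γ * ((x + 1) ^ γ / (x + 1)) = (x + 1) ^ γ - (x + 1) ^ γ * (1 + γ * -(x + 1)⁻¹) := by ring
    _ ≤ _ := by linarith

theorem sum_range_rpow_neg_le {α : ℝ} (hα₀ : 0 ≤ α) (hα₁ : α < 1) (J : ℕ) :
    ∑ n ∈ range J, ((n : ℝ) + 1) ^ (-α) ≤ (J : ℝ) ^ (1 - α) / (1 - α) := by
  rw [le_div_iff₀ (by linarith), sum_mul]
  calc ∑ n ∈ range J, ((n : ℝ) + 1) ^ (-α) * (1 - α)
      ≤ ∑ n ∈ range J, (((n + 1 : ℕ) : ℝ) ^ (1 - α) - (n : ℝ) ^ (1 - α)) := by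
        gcongr with n
        push_cast
        have := mul_rpow_sub_one_le_rpow_sub_rpow (γ := 1 - α) (x := n) (by linarith) (by linarith)
          n.cast_nonneg
        rw [show 1 - α - 1 = -α by ring] at this
        linarith
    _ = (J : ℝ) ^ (1 - α) := by
        rw [sum_range_sub (fun n : ℕ => (n : ℝ) ^ (1 - α))]
        simp [Real.zero_rpow (by linarith : 1 - α ≠ 0)]

theorem sum_Icc_mul_rpow_le {g : ℤ → ℝ} {j₀ : ℤ} {m α : ℝ} (hm : 0 ≤ m)
    (hg : ∀ N : ℕ, ∑ i ∈ Icc (j₀ - N) (j₀ + N), g i ≤ (2 * N + 1) * m)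
    (hα₀ : 0 ≤ α) (hα₁ : α < 1) (J : ℕ) :
    ∑ i ∈ Icc (j₀ - J) (j₀ + J), g i * max |(i : ℝ) - j₀| 1 ^ (-α) ≤
      2 * m * (1 + (J : ℝ) ^ (1 - α) / (1 - α)) := by
  set w : ℕ → ℝ := fun n => max (n : ℝ) 1 ^ (-α)
  have hw : Antitone w := fun k n hkn =>
    Real.rpow_le_rpow_of_nonpos (by positivity) (by gcongr) (by linarith)
  have hfilter : ∀ N ≤ J, {i ∈ Icc (j₀ - J) (j₀ + J) | (i - j₀).natAbs ≤ N} =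
      Icc (j₀ - N) (j₀ + N) := fun N hN => by
    ext i; simp only [mem_filter, mem_Icc]; omega
  calc ∑ i ∈ Icc (j₀ - J) (j₀ + J), g i * max |(i : ℝ) - j₀| 1 ^ (-α)
      = ∑ i ∈ Icc (j₀ - J) (j₀ + J), g i * w (i - j₀).natAbs := by
        refine sum_congr rfl fun i _ => ?_
        simp only [w, Nat.cast_natAbs, Int.cast_abs, Int.cast_sub]
    _ ≤ ∑ n ∈ range (J + 1), 2 * m * w n := by
        refine sum_mul_le_sum_mul_of_sum_filter_le (fun i hi => ?_) hw (by positivity)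
          fun N hN => ?_
        · rw [mem_Icc] at hi; omega
        · rw [hfilter N hN, sum_const, card_range, nsmul_eq_mul]
          push_cast
          linarith [hg N]
    _ = 2 * m * (1 + ∑ n ∈ range J, ((n : ℝ) + 1) ^ (-α)) := by
        rw [← mul_sum, sum_range_succ', add_comm]
        simp [w]
    _ ≤ 2 * m * (1 + (J : ℝ) ^ (1 - α) / (1 - α)) := by
        gcongr; exact sum_range_rpow_neg_le hα₀ hα₁ J

theorem sum_norm_Icc_le_mul_maxOp (b : ℤ → ℂ) (j₀ : ℤ) (N : ℕ) :
    ∑ i ∈ Icc (j₀ - N) (j₀ + N), (‖b i‖₊ : ℝ≥0∞) ≤ (2 * N + 1) * maxOp b j₀ := by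
  rw [mul_comm, ← ENNReal.div_le_iff (by positivity) (by finiteness)]
  exact le_iSup (fun N : ℕ => (∑ i ∈ Icc (j₀ - N) (j₀ + N), (‖b i‖₊ : ℝ≥0∞)) / (2 * N + 1)) N

theorem sum_norm_Icc_le_mul_toReal_maxOp {b : ℤ → ℂ} {j₀ : ℤ} (hM : maxOp b j₀ ≠ ⊤) (N : ℕ) :
    ∑ i ∈ Icc (j₀ - N) (j₀ + N), ‖b i‖ ≤ (2 * N + 1) * (maxOp b j₀).toReal := by
  have := ENNReal.toReal_mono (by finiteness) (sum_norm_Icc_le_mul_maxOp b j₀ N)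
  have h2N : (2 * N + 1 : ℝ≥0∞).toReal = 2 * N + 1 := by norm_cast
  rw [ENNReal.toReal_sum (fun _ _ => by finiteness), ENNReal.toReal_mul, h2N] at this
  simpa using this

theorem div_rpow_mul_rpow_le {i j : ℤ} {t α β : ℝ} (hij : i ≠ j) (h : |i - j| ≤ |j|) (ht : 0 ≤ t)
    (hβ : 0 ≤ β) :
    t / (|(i : ℝ) - j| ^ α * |(i : ℝ) + j| ^ β) ≤
      t * max |(i : ℝ) - j| 1 ^ (-α) / (j.natAbs : ℝ) ^ β := by
  have hsub : (1 : ℝ) ≤ |(i : ℝ) - j| := by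
    have := Int.one_le_abs (sub_ne_zero.2 hij)
    exact_mod_cast this
  have hle : |(i : ℝ) - j| ≤ |(j : ℝ)| := by exact_mod_cast h
  have hadd : |(j : ℝ)| ≤ |(i : ℝ) + j| := by
    have := abs_sub ((i : ℝ) + j) (i - j)
    rw [show (i : ℝ) + j - (i - j) = 2 * j by ring, abs_mul, abs_two] at this
    linarith
  rw [max_eq_left hsub, Real.rpow_neg (by positivity), Nat.cast_natAbs, Int.cast_abs,
    ← div_eq_mul_inv, div_div]
  gcongr
  exact mul_pos (Real.rpow_pos_of_pos (by linarith) α) (Real.rpow_pos_of_pos (by linarith) β)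

theorem sum_Icc_norm_mul_rpow_div_le {b : ℤ → ℂ} {j₀ : ℤ} {α β : ℝ} (hj₀ : j₀ ≠ 0)
    (hM : maxOp b j₀ ≠ ⊤) (hα : 0 ≤ α) (hβ : 0 < β) (hαβ : α + β = 1) :
    (∑ i ∈ Icc (j₀ - j₀.natAbs) (j₀ + j₀.natAbs), ‖b i‖ * max |(i : ℝ) - j₀| 1 ^ (-α)) /
      (j₀.natAbs : ℝ) ^ β ≤ 2 * (1 + 1 / β) * (maxOp b j₀).toReal := by
  have hsum := sum_Icc_mul_rpow_le (g := fun i => ‖b i‖) ENNReal.toReal_nonneg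
    (sum_norm_Icc_le_mul_toReal_maxOp hM) hα (by linarith) j₀.natAbs
  rw [show 1 - α = β by linarith] at hsum
  have hJβ : 1 ≤ (j₀.natAbs : ℝ) ^ β :=
    Real.one_le_rpow (by exact_mod_cast Int.natAbs_pos.2 hj₀) hβ.le
  have hm : 0 ≤ (maxOp b j₀).toReal := ENNReal.toReal_nonneg
  rw [div_le_iff₀ (by positivity)]
  refine hsum.trans ?_
  field_simp
  nlinarith [mul_nonneg (mul_nonneg hm hβ.le) (sub_nonneg.2 hJβ)]

/-- **Pointwise bound by the maximal function on `I₁ = {i : 0 < |i - j₀| ≤ |j₀|}`.**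
Let `α, β > 0` with `α + β = 1`. There is `C > 0`, depending only on `α`, such that for
every sequence `b : ℤ → ℂ` and every `j₀ ≠ 0`:
`∑_{0 < |i-j₀| ≤ |j₀|} |b(i)|/(|i-j₀|^α |i+j₀|^β) ≤ C (Mb)(j₀)`,
the inequality being understood in `[0,∞]`. -/
theorem stmt18 (α β : ℝ) (hα : 0 < α) (hβ : 0 < β) (hαβ : α + β = 1) :
    ∃ C : ℝ, 0 < C ∧ ∀ (b : ℤ → ℂ) (j₀ : ℤ), j₀ ≠ 0 →
      (∑' i : ℤ, if i ≠ j₀ ∧ |i - j₀| ≤ |j₀| then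
          ENNReal.ofReal (‖b i‖ / (|(i : ℝ) - (j₀ : ℝ)| ^ α * |(i : ℝ) + (j₀ : ℝ)| ^ β))
        else 0) ≤
        ENNReal.ofReal C * maxOp b j₀ := by
  refine ⟨2 * (1 + 1 / β), by positivity, fun b j₀ hj₀ => ?_⟩
  rcases eq_or_ne (maxOp b j₀) ⊤ with hM | hM
  · rw [hM, ENNReal.mul_top (by simp; positivity)]
    exact le_top
  set J := j₀.natAbs
  rw [tsum_eq_sum (s := Icc (j₀ - J) (j₀ + J)) fun i hi => if_neg fun ⟨_, h⟩ => hi (by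
    rw [Int.abs_eq_natAbs, Int.abs_eq_natAbs] at h; rw [mem_Icc]; omega)]
  calc _ ≤ ∑ i ∈ Icc (j₀ - J) (j₀ + J),
        ENNReal.ofReal (‖b i‖ * max |(i : ℝ) - j₀| 1 ^ (-α) / (J : ℝ) ^ β) := by
        gcongr with i
        split_ifs with h
        · exact ENNReal.ofReal_le_ofReal (div_rpow_mul_rpow_le h.1 h.2 (norm_nonneg _) hβ.le)
        · exact bot_le
    _ = ENNReal.ofReal ((∑ i ∈ Icc (j₀ - J) (j₀ + J), ‖b i‖ * max |(i : ℝ) - j₀| 1 ^ (-α)) /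
        (J : ℝ) ^ β) := by
        rw [sum_div, ENNReal.ofReal_sum_of_nonneg fun _ _ => by positivity]
    _ ≤ ENNReal.ofReal (2 * (1 + 1 / β) * (maxOp b j₀).toReal) :=
        ENNReal.ofReal_le_ofReal (sum_Icc_norm_mul_rpow_div_le hj₀ hM hα.le hβ hαβ)
    _ = _ := by rw [ENNReal.ofReal_mul (by positivity), ENNReal.ofReal_toReal hM]
end

section
/- Let α, β > 0 with α + β = 1 and let 1 ≤ p < ∞. There exists a constant C > 0 such that for every b ∈ ℓ^p(ℤ) and every j₀ ∈ ℤ with j₀ ≠ 0: ∑_{i ∈ ℤ, |i| > 2|j₀|} |b(i)| / (|i − j₀|^α |i + j₀|^β) ≤ C ‖b‖_{ℓ^p(ℤ)} |j₀|^{−1/p}. -/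
/-!
For `|i| > 2|j₀|` both `|i - j₀|` and `|i + j₀|` exceed `|i|/2`, so, as `α + β = 1`, the weight
`|i - j₀|^(-α) |i + j₀|^(-β)` is at most `2/|i|`. For `p = 1` this is at most `1/|j₀|`. For
`p > 1`, Hölder's inequality bounds the sum by `‖b‖_p` times the `ℓ^q`-norm of `2/|i|` over
`|i| > M = 2|j₀|`; the mean value theorem for `x ↦ x^(1-q)` makes that `p`-series tail telescope,
`∑_{|i|>M} |i|^(-q) ≤ 2 M^(1-q)/(q-1)`, and `(1-q)/q = -1/p` gives the factor `|j₀|^(-1/p)`.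
-/

open Real Finset

lemma mul_rpow_neg_le_rpow_sub_rpow {q x : ℝ} (hq : 1 < q) (hx : 0 < x) :
    (q - 1) * (x + 1) ^ (-q) ≤ x ^ (1 - q) - (x + 1) ^ (1 - q) := by
  have hderiv : ∀ y ∈ Set.Icc x (x + 1), HasDerivAt (· ^ (1 - q)) ((1 - q) * y ^ (-q)) y :=
    fun y hy => by
      simpa using hasDerivAt_rpow_const (p := 1 - q) (Or.inl (hx.trans_le hy.1).ne')
  obtain ⟨c, hc, hslope⟩ := exists_hasDerivAt_eq_slope (· ^ (1 - q)) (fun y => (1 - q) * y ^ (-q))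
    (lt_add_one x) (fun y hy => (hderiv y hy).continuousAt.continuousWithinAt)
    (fun y hy => hderiv y (Set.Ioo_subset_Icc_self hy))
  have hmono : (x + 1) ^ (-q) ≤ c ^ (-q) :=
    rpow_le_rpow_of_nonpos (hx.trans hc.1) hc.2.le (by linarith)
  simp only [add_sub_cancel_left, div_one] at hslope
  calc (q - 1) * (x + 1) ^ (-q) ≤ (q - 1) * c ^ (-q) :=
        mul_le_mul_of_nonneg_left hmono (by linarith)
    _ = x ^ (1 - q) - (x + 1) ^ (1 - q) := by linarith

lemma tsum_nat_tail_rpow_neg_le {q : ℝ} (hq : 1 < q) {M : ℕ} (hM : 0 < M) :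
    ∑' n : ℕ, (if M < n then (n : ℝ) ^ (-q) else 0) ≤ (M : ℝ) ^ (1 - q) / (q - 1) := by
  set ψ : ℕ → ℝ := fun n => max (M : ℝ) (n - 1) ^ (1 - q) / (q - 1)
  have hterm : ∀ n : ℕ, (if M < n then (n : ℝ) ^ (-q) else 0) ≤ ψ n - ψ (n + 1) := by
    intro n
    simp only [ψ, Nat.cast_succ, add_sub_cancel_right]
    split_ifs with hn
    · have hMn : (M : ℝ) + 1 ≤ n := by exact_mod_cast hn
      have hpos : (0 : ℝ) < n - 1 := by linarith [(Nat.cast_pos (α := ℝ)).2 hM]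
      rw [max_eq_right (by linarith), max_eq_right (by linarith), ← sub_div,
        le_div_iff₀ (by linarith)]
      simpa [mul_comm] using mul_rpow_neg_le_rpow_sub_rpow hq hpos
    · have hnM : (n : ℝ) ≤ M := by exact_mod_cast not_lt.mp hn
      rw [max_eq_left (by linarith), max_eq_left hnM, sub_self]
  refine tsum_le_of_sum_range_le (fun n => ?_) fun N => ?_
  · split_ifs <;> positivity
  calc ∑ n ∈ range N, (if M < n then (n : ℝ) ^ (-q) else 0)
      ≤ ∑ n ∈ range N, (ψ n - ψ (n + 1)) := sum_le_sum fun n _ => hterm n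
    _ = ψ 0 - ψ N := sum_range_sub' ψ N
    _ ≤ (M : ℝ) ^ (1 - q) / (q - 1) := by
      have hψ : 0 ≤ ψ N :=
        div_nonneg (rpow_nonneg (le_max_of_le_left M.cast_nonneg) _) (by linarith)
      have h0 : ψ 0 = (M : ℝ) ^ (1 - q) / (q - 1) := by
        simp only [ψ, Nat.cast_zero, zero_sub]
        rw [max_eq_left (by linarith [M.cast_nonneg (α := ℝ)])]
      linarith

lemma tsum_int_tail_rpow_neg_le {q : ℝ} (hq : 1 < q) {M : ℕ} (hM : 0 < M) :
    Summable (fun i : ℤ => if (M : ℤ) < |i| then |(i : ℝ)| ^ (-q) else 0) ∧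
    ∑' i : ℤ, (if (M : ℤ) < |i| then |(i : ℝ)| ^ (-q) else 0) ≤
      2 * ((M : ℝ) ^ (1 - q) / (q - 1)) := by
  set f : ℤ → ℝ := fun i => if (M : ℤ) < |i| then |(i : ℝ)| ^ (-q) else 0
  have hf : Summable f := (summable_abs_int_rpow hq).of_nonneg_of_le
    (fun i => by positivity) fun i => by simp only [f]; split_ifs <;> simp [rpow_nonneg]
  have hsymm : ∀ n : ℕ, f n + f (-n) = 2 * if M < n then (n : ℝ) ^ (-q) else 0 := by
    intro n
    simp only [f, Int.cast_neg, abs_neg, Int.cast_natCast, Nat.abs_cast, Nat.cast_lt]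
    split_ifs <;> ring
  refine ⟨hf, ?_⟩
  have h := tsum_nat_add_neg hf
  simp only [hsymm, tsum_mul_left] at h
  have hf0 : f 0 = 0 := by simp [f]
  linarith [tsum_nat_tail_rpow_neg_le hq hM]

section TailDivAbs

variable {f : ℤ → ℝ} {M : ℕ}

lemma tsum_tail_div_abs_le_of_holderConjugate {p q : ℝ} (hpq : p.HolderConjugate q)
    (hf : ∀ i, 0 ≤ f i) (hfp : Summable fun i => f i ^ p) (hM : 0 < M) :
    Summable (fun i : ℤ => if (M : ℤ) < |i| then f i / |(i : ℝ)| else 0) ∧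
    ∑' i : ℤ, (if (M : ℤ) < |i| then f i / |(i : ℝ)| else 0) ≤
      (2 / (q - 1)) ^ (1 / q) * (∑' i, f i ^ p) ^ (1 / p) * (M : ℝ) ^ (-(1 / p)) := by
  have hq := hpq.symm.lt
  set g : ℤ → ℝ := fun i => if (M : ℤ) < |i| then |(i : ℝ)|⁻¹ else 0
  have hfg : (fun i : ℤ => if (M : ℤ) < |i| then f i / |(i : ℝ)| else 0) = fun i => f i * g i := by
    ext i; simp only [g]; split_ifs <;> simp [div_eq_mul_inv]
  have hgq : (fun i => g i ^ q) = fun i : ℤ => if (M : ℤ) < |i| then |(i : ℝ)| ^ (-q) else 0 := by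
    ext i; simp only [g]; split_ifs
    · rw [inv_rpow (abs_nonneg _), rpow_neg (abs_nonneg _)]
    · exact zero_rpow hpq.symm.ne_zero
  obtain ⟨hgq_sum, hgq_le⟩ := tsum_int_tail_rpow_neg_le hq hM
  rw [← hgq] at hgq_sum hgq_le
  have hg : ∀ i, 0 ≤ g i := fun i => by simp only [g]; split_ifs <;> positivity
  obtain ⟨hfg_sum, hholder⟩ :=
    summable_and_inner_le_Lp_mul_Lq_tsum_of_nonneg hpq hf hg hfp hgq_sum
  rw [hfg]
  refine ⟨hfg_sum, hholder.trans ?_⟩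
  have hexp : (1 - q) * (1 / q) = -(1 / p) := by
    rw [sub_mul, one_mul, mul_one_div_cancel hpq.symm.ne_zero, one_div, one_div,
      ← hpq.symm.one_sub_inv]
    ring
  calc (∑' i, f i ^ p) ^ (1 / p) * (∑' i, g i ^ q) ^ (1 / q)
      ≤ (∑' i, f i ^ p) ^ (1 / p) * (2 / (q - 1) * (M : ℝ) ^ (1 - q)) ^ (1 / q) := by
        refine mul_le_mul_of_nonneg_left (rpow_le_rpow (tsum_nonneg fun i => rpow_nonneg (hg i) _)
          (hgq_le.trans_eq (by ring)) (by positivity))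
          (rpow_nonneg (tsum_nonneg fun i => rpow_nonneg (hf i) _) _)
    _ = (2 / (q - 1)) ^ (1 / q) * (∑' i, f i ^ p) ^ (1 / p) * (M : ℝ) ^ (-(1 / p)) := by
        rw [mul_rpow (div_nonneg zero_le_two (sub_pos.2 hq).le) (by positivity),
          ← rpow_mul (by positivity), hexp]
        ring

lemma tsum_tail_div_abs_le_of_summable (hf : ∀ i, 0 ≤ f i) (hf₁ : Summable f) (hM : 0 < M) :
    Summable (fun i : ℤ => if (M : ℤ) < |i| then f i / |(i : ℝ)| else 0) ∧
    ∑' i : ℤ, (if (M : ℤ) < |i| then f i / |(i : ℝ)| else 0) ≤ (∑' i, f i) * (M : ℝ)⁻¹ := by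
  have hle : ∀ i : ℤ, (if (M : ℤ) < |i| then f i / |(i : ℝ)| else 0) ≤ f i * (M : ℝ)⁻¹ := by
    intro i
    split_ifs with hi
    · rw [← div_eq_mul_inv]
      refine div_le_div_of_nonneg_left (hf i) (by positivity) ?_
      rw [← Int.cast_abs]
      exact_mod_cast hi.le
    · exact mul_nonneg (hf i) (by positivity)
  have hsum : Summable (fun i : ℤ => if (M : ℤ) < |i| then f i / |(i : ℝ)| else 0) :=
    (hf₁.mul_right _).of_nonneg_of_le
      (fun i => by split_ifs; exacts [div_nonneg (hf i) (abs_nonneg _), le_rfl]) hle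
  exact ⟨hsum, (hsum.tsum_le_tsum hle (hf₁.mul_right _)).trans_eq tsum_mul_right⟩

theorem exists_tsum_tail_div_abs_le {p : ℝ} (hp : 1 ≤ p) :
    ∃ K > 0, ∀ f : ℤ → ℝ, (∀ i, 0 ≤ f i) → (Summable fun i => f i ^ p) → ∀ M : ℕ, 0 < M →
      Summable (fun i : ℤ => if (M : ℤ) < |i| then f i / |(i : ℝ)| else 0) ∧
      ∑' i : ℤ, (if (M : ℤ) < |i| then f i / |(i : ℝ)| else 0) ≤
        K * (∑' i, f i ^ p) ^ (1 / p) * (M : ℝ) ^ (-(1 / p)) := by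
  rcases hp.eq_or_lt with rfl | hp
  · refine ⟨1, one_pos, fun f hf hf₁ M hM => ?_⟩
    simp only [rpow_one, div_one, one_mul, rpow_neg_one] at hf₁ ⊢
    exact tsum_tail_div_abs_le_of_summable hf hf₁ hM
  · have hpq := Real.HolderConjugate.conjExponent hp
    exact ⟨_, rpow_pos_of_pos (div_pos two_pos (sub_pos.2 hpq.symm.lt)) _,
      fun f hf hfp M hM => tsum_tail_div_abs_le_of_holderConjugate hpq hf hfp hM⟩

end TailDivAbs

lemma div_rpow_mul_rpow_le_two_mul_div {α β x y c : ℝ} (hα : 0 ≤ α) (hβ : 0 ≤ β)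
    (hαβ : α + β = 1) (hxy : 2 * |y| < |x|) (hc : 0 ≤ c) :
    c / (|x - y| ^ α * |x + y| ^ β) ≤ 2 * (c / |x|) := by
  have hx : 0 < |x| / 2 := by linarith [abs_nonneg y]
  have hsub : |x| / 2 ≤ |x - y| := by linarith [abs_sub_abs_le_abs_sub x y]
  have hadd : |x| / 2 ≤ |x + y| := by
    have := abs_sub_abs_le_abs_sub x (-y)
    rw [abs_neg, sub_neg_eq_add] at this
    linarith
  have hden : |x| / 2 ≤ |x - y| ^ α * |x + y| ^ β :=
    calc |x| / 2 = (|x| / 2) ^ α * (|x| / 2) ^ β := by rw [← rpow_add hx, hαβ, rpow_one]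
      _ ≤ |x - y| ^ α * |x + y| ^ β := by gcongr
  calc c / (|x - y| ^ α * |x + y| ^ β) ≤ c / (|x| / 2) := div_le_div_of_nonneg_left hc hx hden
    _ = 2 * (c / |x|) := by ring

/-- **Tail estimate on `I₃ = {i : |i| > 2|j₀|}`.**
Let `α, β > 0` with `α + β = 1` and `1 ≤ p < ∞`. There is `C > 0` such that for every
`b ∈ ℓ^p(ℤ)` and every `j₀ ≠ 0`:
`∑_{|i| > 2|j₀|} |b(i)|/(|i-j₀|^α |i+j₀|^β) ≤ C ‖b‖_{ℓ^p(ℤ)} |j₀|^{-1/p}`. -/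
theorem stmt19 (α β p : ℝ) (hα : 0 < α) (hβ : 0 < β) (hαβ : α + β = 1) (hp : 1 ≤ p) :
    ∃ C : ℝ, 0 < C ∧ ∀ b : ℤ → ℂ, Summable (fun i : ℤ => ‖b i‖ ^ p) →
      ∀ j₀ : ℤ, j₀ ≠ 0 →
        (∑' i : ℤ, if 2 * |j₀| < |i| then
            ENNReal.ofReal (‖b i‖ / (|(i : ℝ) - (j₀ : ℝ)| ^ α * |(i : ℝ) + (j₀ : ℝ)| ^ β))
          else 0) ≤
          ENNReal.ofReal (C * (∑' i : ℤ, ‖b i‖ ^ p) ^ (1 / p) * |(j₀ : ℝ)| ^ (-(1 / p))) := by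
  obtain ⟨K, hK, htail⟩ := exists_tsum_tail_div_abs_le hp
  refine ⟨2 * K, by positivity, fun b hb j₀ hj₀ => ?_⟩
  have hj : (0 : ℝ) < |(j₀ : ℝ)| := by positivity
  have hMZ : ((2 * j₀.natAbs : ℕ) : ℤ) = 2 * |j₀| := by simp
  have hMR : ((2 * j₀.natAbs : ℕ) : ℝ) = 2 * |(j₀ : ℝ)| := by simp [Nat.cast_natAbs]
  obtain ⟨hsum, hle⟩ := htail (‖b ·‖) (fun i => norm_nonneg _) hb (2 * j₀.natAbs) (by omega)
  rw [hMZ, hMR] at *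
  calc _ ≤ ∑' i : ℤ, ENNReal.ofReal (2 * if 2 * |j₀| < |i| then ‖b i‖ / |(i : ℝ)| else 0) := by
        refine ENNReal.tsum_le_tsum fun i => ?_
        split_ifs with hi
        · refine ENNReal.ofReal_le_ofReal (div_rpow_mul_rpow_le_two_mul_div hα.le hβ.le hαβ ?_
            (norm_nonneg _))
          exact_mod_cast hi
        · simp
    _ = ENNReal.ofReal (2 * ∑' i : ℤ, if 2 * |j₀| < |i| then ‖b i‖ / |(i : ℝ)| else 0) := by
        rw [← tsum_mul_left,
          ENNReal.ofReal_tsum_of_nonneg (fun i => by positivity) (hsum.mul_left 2)]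
    _ ≤ _ := by
        refine ENNReal.ofReal_le_ofReal ?_
        have hpow : (2 * |(j₀ : ℝ)|) ^ (-(1 / p)) ≤ |(j₀ : ℝ)| ^ (-(1 / p)) :=
          rpow_le_rpow_of_nonpos hj (by linarith) (by simp only [neg_nonpos]; positivity)
        have hS : 0 ≤ 2 * K * (∑' i : ℤ, ‖b i‖ ^ p) ^ (1 / p) := by positivity
        linear_combination 2 * hle + mul_le_mul_of_nonneg_left hpow hS
end
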